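/- arXiv:2109.14939 — 9 statements merged into one kernel-verified Lean document; each statement's English description precedes it below -/
import Mathlib

section
/- Let f: A → B be a ring homomorphism such that B is finitely generated as a right A-module (via f). Then f is a ring epimorphism if and only if for all finitely generated right B-modules M, N, every A-linear map M → N is B-linear, i.e. Hom_A(M,N) = Hom_B(M,N). -/
universe u

open MulOpposite

/-- `f : A → B` is an epimorphism in the category of rings. -/
def IsRingEpi {A B : Type u} [Ring A] [Ring B] (f : A →+* B) : Prop :=
  ∀ ⦃T : Type u⦄ [Ring T], ∀ g₁ g₂ : B →+* T, g₁.comp f = g₂.comp f → g₁ = g₂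

/-- Let `f : A → B` make `B` into a finitely generated right `A`-module.
Then `f` is a ring epimorphism iff for all finitely generated right `B`-modules `M`, `N`,
every `A`-linear map `M → N` (for the `A`-action via `f`) is already `B`-linear. -/
theorem stmt4 {A B : Type u} [Ring A] [Ring B] (f : A →+* B)
    (hfg : ∃ s : Finset B, ∀ b : B,
      b ∈ AddSubgroup.closure {x : B | ∃ g ∈ s, ∃ a : A, x = g * f a}) :
    IsRingEpi f ↔
      ∀ (M N : Type u) [AddCommGroup M] [AddCommGroup N] [Module Bᵐᵒᵖ M] [Module Bᵐᵒᵖ N],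
        Module.Finite Bᵐᵒᵖ M → Module.Finite Bᵐᵒᵖ N →
          ∀ g : M →+ N, (∀ (a : A) (m : M), g (op (f a) • m) = op (f a) • g m) →
            ∀ (b : B) (m : M), g (op b • m) = op b • g m := by
  constructor
  · -- forward direction
    intro hepi M N _ _ _ _ _ _ g hA b m
    -- the "square zero" trick with P = M × N
    have endext : ∀ {φ ψ : AddMonoid.End (M × N)}, (∀ p, φ p = ψ p) → φ = ψ :=
      fun h => DFunLike.ext _ _ h
    have hmulapp : ∀ (φ ψ : AddMonoid.End (M × N)) (p : M × N), (φ * ψ) p = φ (ψ p) :=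
      fun _ _ _ => rfl
    set d : B → AddMonoid.End (M × N) :=
      fun b => DistribMulAction.toAddMonoidHom (M × N) (op b) with hd
    have hdapp : ∀ (b : B) (p : M × N), d b p = (op b • p.1, op b • p.2) := by
      intro b p; rfl
    set u : AddMonoid.End (M × N) :=
      AddMonoidHom.mk' (fun p => (p.1, p.2 + g p.1))
        (by intro p q; simp [Prod.ext_iff]; abel) with hu
    set v : AddMonoid.End (M × N) :=
      AddMonoidHom.mk' (fun p => (p.1, p.2 - g p.1))
        (by intro p q; simp [Prod.ext_iff]; abel) with hv
    have huapp : ∀ p : M × N, u p = (p.1, p.2 + g p.1) := fun _ => rfl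
    have hvapp : ∀ p : M × N, v p = (p.1, p.2 - g p.1) := fun _ => rfl
    have hdmul : ∀ x y : B, d (x * y) = d y * d x := by
      intro x y
      apply endext; intro p
      simp [hdapp, hmulapp, op_mul, mul_smul, Prod.ext_iff]
    have haddapp : ∀ (φ ψ : AddMonoid.End (M × N)) (p : M × N), (φ + ψ) p = φ p + ψ p :=
      fun _ _ _ => rfl
    have hdone : d (1 : B) = 1 := by
      apply endext; intro p
      simp [hdapp, Prod.ext_iff]
    have hvu : v * u = 1 := by
      apply endext; intro p
      simp [hmulapp, huapp, hvapp]
    have huv : u * v = 1 := by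
      apply endext; intro p
      simp [hmulapp, huapp, hvapp]
    set g₁ : B →+* (AddMonoid.End (M × N))ᵐᵒᵖ :=
      { toFun := fun b => op (d b)
        map_one' := by apply unop_injective; simpa using hdone
        map_mul' := by
          intro x y
          apply unop_injective
          simpa using hdmul x y
        map_zero' := by
          apply unop_injective
          apply endext; intro p
          simp [hdapp, Prod.ext_iff]
        map_add' := by
          intro x y
          apply unop_injective
          show d (x + y) = d x + d y
          apply endext; intro p
          simp [hdapp, haddapp, op_add, add_smul, Prod.ext_iff] } with hg₁
    set g₂ : B →+* (AddMonoid.End (M × N))ᵐᵒᵖ :=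
      { toFun := fun b => op (u * d b * v)
        map_one' := by
          apply unop_injective
          simpa [hdone] using huv
        map_mul' := by
          intro x y
          apply unop_injective
          show u * d (x * y) * v = (u * d y * v) * (u * d x * v)
          calc u * d (x * y) * v = u * (d y * d x) * v := by rw [hdmul]
            _ = u * d y * ((v * u) * (d x * v)) := by rw [hvu]; noncomm_ring
            _ = (u * d y * v) * (u * d x * v) := by noncomm_ring
        map_zero' := by
          apply unop_injective
          apply endext; intro p
          simp [hmulapp, hdapp, huapp, hvapp, Prod.ext_iff]
        map_add' := by
          intro x y
          apply unop_injective
          show u * d (x + y) * v = u * d x * v + u * d y * v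
          apply endext; intro p
          simp only [haddapp, hmulapp, hdapp, huapp, hvapp, op_add, add_smul, smul_sub, smul_add,
            Prod.ext_iff, Prod.fst_add, Prod.snd_add, map_add]
          constructor
          · trivial
          · abel } with hg₂
    have hcomp : g₁.comp f = g₂.comp f := by
      ext a
      apply unop_injective
      apply endext; intro p
      show d (f a) p = (u * (d (f a) * v)) p
      simp only [hmulapp, hdapp, huapp, hvapp, smul_sub, Prod.ext_iff]
      refine ⟨by trivial, ?_⟩
      rw [hA]
      abel
    have h := hepi g₁ g₂ hcomp
    have heq : d b = u * d b * v := congrArg unop (RingHom.congr_fun h b)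
    have h2 : d b (m, 0) = (u * d b * v) (m, 0) := by rw [← heq]
    have h3 := congrArg Prod.snd h2
    simp only [hmulapp, hdapp, huapp, hvapp, smul_zero, sub_zero, zero_sub, smul_neg] at h3
    have h4 : g (op b • m) = op b • g m := by
      have := h3.symm
      rw [neg_add_eq_zero] at this
      exact this.symm
    exact h4
  · -- backward direction
    intro H T _ g₁ g₂ hcomp
    obtain ⟨s, hs⟩ := hfg
    have hfa : ∀ a : A, g₁ (f a) = g₂ (f a) := fun a => RingHom.congr_fun hcomp a
    letI : Module Bᵐᵒᵖ T := Module.compHom T (RingHom.op g₂)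
    have hsmulT : ∀ (b : B) (x : T), op b • x = x * g₂ b := fun b x => rfl
    set Nsp : Submodule Bᵐᵒᵖ T := Submodule.span Bᵐᵒᵖ (g₁ '' ↑s) with hNsp
    have hmem : ∀ b : B, g₁ b ∈ Nsp := by
      have hle : AddSubgroup.closure {x : B | ∃ g ∈ s, ∃ a : A, x = g * f a} ≤
          AddSubgroup.comap g₁.toAddMonoidHom Nsp.toAddSubgroup := by
        rw [AddSubgroup.closure_le]
        rintro x ⟨gg, hgg, a, rfl⟩
        show g₁ (gg * f a) ∈ Nsp
        have : g₁ (gg * f a) = op (f a) • (g₁ gg : T) := by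
          rw [hsmulT, map_mul, hfa]
        rw [this]
        exact Submodule.smul_mem _ _ (Submodule.subset_span ⟨gg, hgg, rfl⟩)
      intro b
      exact hle (hs b)
    set g' : B →+ ↥Nsp :=
      AddMonoidHom.mk' (fun b => ⟨g₁ b, hmem b⟩)
        (fun a b => Subtype.ext (map_add g₁ a b)) with hg'
    have hA : ∀ (a : A) (m : B), g' (op (f a) • m) = op (f a) • g' m := by
      intro a m
      apply Subtype.ext
      show g₁ (op (f a) • m) = op (f a) • (g₁ m : T)
      rw [op_smul_eq_mul, hsmulT, map_mul, hfa]
    haveI hMfin : Module.Finite Bᵐᵒᵖ B := by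
      refine ⟨⟨{1}, ?_⟩⟩
      rw [eq_top_iff]
      intro x _
      have : x ∈ Submodule.span Bᵐᵒᵖ ({1} : Set B) :=
        Submodule.mem_span_singleton.mpr ⟨op x, by rw [op_smul_eq_mul, one_mul]⟩
      simpa using this
    haveI hNfin : Module.Finite Bᵐᵒᵖ ↥Nsp :=
      Module.Finite.span_of_finite _ ((s : Set B).toFinite.image g₁)
    have key := H B ↥Nsp hMfin hNfin g' hA
    ext b
    have h1 := key b 1
    have h2 : (g' (op b • (1 : B)) : T) = (op b • g' 1 : ↥Nsp) := congrArg Subtype.val h1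
    rw [op_smul_eq_mul, one_mul] at h2
    have h3 : (g' b : T) = g₁ b := rfl
    have h4 : ((op b • g' 1 : ↥Nsp) : T) = op b • (g₁ 1 : T) := rfl
    rw [h3, h4, hsmulT, map_one, one_mul] at h2
    exact h2
end

section
/- Let f: A → B be a ring homomorphism. Then f is a ring epimorphism if and only if: (1) for all finitely generated right B-modules M, N, Hom_A(M,N) = Hom_B(M,N), and (2) for any right B-module L and any A-linear map ψ: B → L, the image of ψ is contained in a finitely generated B-submodule of L. -/
/-!
An `A`-linear map `g : M → N` of right `B`-modules is `B`-linear iff the shear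
`(m, n) ↦ (m, n + g m)`, a unit of `End (M × N)`, commutes with the action of `B`. Conjugating
the action by a unit that commutes with the action of `A` gives a second ring map out of `Bᵒᵖ`
that agrees with the action on `A`, so for an epimorphism the shear commutes with all of `B`.
Taking `M = B` shows that an `A`-linear `ψ : B → L` is `b ↦ ψ 1 · b`, with image in the cyclic
submodule generated by `ψ 1`.

Conversely, let `g₁, g₂ : B → T` agree on `A` and make `T` a right `B`-module through `g₂`. Then
`g₁ - g₂` is `A`-linear, so `g₁ b = (g₁ - g₂) b + 1 · b` lands in a finitely generated submodule
`Q`, and `g₁ : B → Q` is `A`-linear, hence `B`-linear: `g₁ b = g₁ 1 * g₂ b = g₂ b`.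
-/

universe u

open MulOpposite

theorem Module.Finite.op_self (B : Type*) [Ring B] : Module.Finite Bᵐᵒᵖ B := by
  refine ⟨⟨{1}, Submodule.eq_top_iff'.mpr fun b => ?_⟩⟩
  rw [Finset.coe_singleton, Submodule.mem_span_singleton]
  exact ⟨op b, by rw [op_smul_eq_mul, one_mul]⟩

namespace IsRingEpi

variable {A B : Type u} [Ring A] [Ring B] {f : A →+* B}

theorem opposite (hf : IsRingEpi f) : IsRingEpi f.op := by
  intro T _ g₁ g₂ h
  let toOp (g : Bᵐᵒᵖ →+* T) : B →+* Tᵐᵒᵖ := RingHom.unop ((RingEquiv.opOp T).toRingHom.comp g)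
  have hop : toOp g₁ = toOp g₂ := hf _ _ <| RingHom.ext fun a =>
    congrArg op (RingHom.congr_fun h (op a))
  exact RingHom.ext fun b => congrArg unop (RingHom.congr_fun hop b.unop)

theorem commute_of_commute (hf : IsRingEpi f) {T : Type u} [Ring T] (g : B →+* T) {u : T}
    (hu : IsUnit u) (hcomm : ∀ a, Commute u (g (f a))) (b : B) : Commute u (g b) := by
  obtain ⟨u, rfl⟩ := hu
  let conj : T →+* T := MulSemiringAction.toRingHom (ConjAct Tˣ) T (ConjAct.toConjAct u)
  have conj_apply (t : T) : conj t = u * t * ↑u⁻¹ := ConjAct.units_smul_def _ _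
  have hconj : conj.comp g = g := hf _ _ <| RingHom.ext fun a => by
    simpa [conj_apply, Units.mul_inv_eq_iff_eq_mul] using (hcomm a).eq
  have := RingHom.congr_fun hconj b
  rw [RingHom.comp_apply, conj_apply, Units.mul_inv_eq_iff_eq_mul] at this
  exact this

theorem map_smul_of_map_smul (hf : IsRingEpi f) {M N : Type u} [AddCommGroup M]
    [AddCommGroup N] [Module Bᵐᵒᵖ M] [Module Bᵐᵒᵖ N] (g : M →+ N)
    (hg : ∀ (a : A) (m : M), g (op (f a) • m) = op (f a) • g m) (b : B) (m : M) :
    g (op b • m) = op b • g m := by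
  let ρ := Module.toAddMonoidEnd Bᵐᵒᵖ (M × N)
  let ν : AddMonoid.End (M × N) := (AddMonoidHom.inr M N).comp (g.comp (AddMonoidHom.fst M N))
  have mul_apply (φ ψ : AddMonoid.End (M × N)) (p : M × N) : (φ * ψ) p = φ (ψ p) := rfl
  have ν_apply (p : M × N) : ν p = (0, g p.1) := rfl
  have ρ_apply (x : Bᵐᵒᵖ) (p : M × N) : ρ x p = x • p := rfl
  have commute_iff (x : Bᵐᵒᵖ) : Commute ν (ρ x) ↔ ∀ m, g (x • m) = x • g m := by
    refine ⟨fun h m => ?_, fun h => AddMonoid.End.ext _ fun p => ?_⟩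
    · simpa [mul_apply, ν_apply, ρ_apply] using congrArg Prod.snd (DFunLike.congr_fun h.eq (m, 0))
    · simp [mul_apply, ν_apply, ρ_apply, h]
  have hν : IsNilpotent ν := ⟨2, AddMonoid.End.ext _ fun p => by
    simp [pow_two, mul_apply, ν_apply, AddMonoid.End.zero_apply]⟩
  have hcomm : ∀ a : Aᵐᵒᵖ, Commute (1 + ν) (ρ (f.op a)) := fun a =>
    (Commute.one_left _).add_left ((commute_iff _).mpr (hg a.unop))
  have := hf.opposite.commute_of_commute ρ hν.isUnit_one_add hcomm (op b)
  exact (commute_iff _).mp (by simpa using this.sub_left (Commute.one_left _)) m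

theorem map_eq_op_smul_map_one (hf : IsRingEpi f) {L : Type u} [AddCommGroup L]
    [Module Bᵐᵒᵖ L] (ψ : B →+ L) (hψ : ∀ (a : A) (b : B), ψ (b * f a) = op (f a) • ψ b)
    (b : B) : ψ b = op b • ψ 1 := by
  simpa using hf.map_smul_of_map_smul ψ (fun a b => by simpa using hψ a b) b 1

theorem of_forall_map_eq_op_smul_map_one
    (hlin : ∀ (N : Type u) [AddCommGroup N] [Module Bᵐᵒᵖ N], Module.Finite Bᵐᵒᵖ N →
      ∀ g : B →+ N, (∀ (a : A) (b : B), g (b * f a) = op (f a) • g b) → ∀ b, g b = op b • g 1)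
    (hfg : ∀ (L : Type u) [AddCommGroup L] [Module Bᵐᵒᵖ L],
      ∀ ψ : B →+ L, (∀ (a : A) (b : B), ψ (b * f a) = op (f a) • ψ b) →
        ∃ P : Submodule Bᵐᵒᵖ L, P.FG ∧ ∀ b : B, ψ b ∈ P) :
    IsRingEpi f := by
  intro T _ g₁ g₂ h
  have hA (a : A) : g₁ (f a) = g₂ (f a) := RingHom.congr_fun h a
  let : Module Bᵐᵒᵖ T := Module.compHom T (RingHom.op g₂)
  have smul_def (b : B) (t : T) : op b • t = t * g₂ b := rfl
  obtain ⟨P, hP, hψP⟩ := hfg T (g₁.toAddMonoidHom - g₂.toAddMonoidHom) fun a b => by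
    simp [smul_def, hA, sub_mul]
  let Q := P ⊔ Submodule.span Bᵐᵒᵖ {(1 : T)}
  have hQ : Module.Finite Bᵐᵒᵖ Q :=
    Module.Finite.iff_fg.mpr (hP.sup (Submodule.fg_span_singleton _))
  have hg₁Q (b : B) : g₁ b ∈ Q := by
    have : g₁ b = (g₁ b - g₂ b) + op b • 1 := by simp [smul_def]
    rw [this]
    exact Q.add_mem (Submodule.mem_sup_left (hψP b))
      (Q.smul_mem _ (Submodule.mem_sup_right (Submodule.mem_span_singleton_self _)))
  let g : B →+ Q := g₁.toAddMonoidHom.codRestrict Q hg₁Q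
  refine RingHom.ext fun b => ?_
  have := congrArg Subtype.val (hlin Q hQ g (fun a b => Subtype.ext ?_) b)
  · simpa [g, smul_def] using this
  · simp [g, smul_def, hA]

end IsRingEpi

/-- `f : A → B` is a ring epimorphism iff (1) for all finitely generated right
`B`-modules `M`, `N`, every `A`-linear map `M → N` (`A` acting via `f`) is `B`-linear, and
(2) for every right `B`-module `L` and every `A`-linear map `ψ : B → L`, the image of `ψ` is
contained in a finitely generated `B`-submodule of `L`. -/
theorem stmt5 {A B : Type u} [Ring A] [Ring B] (f : A →+* B) :
    IsRingEpi f ↔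
      ((∀ (M N : Type u) [AddCommGroup M] [AddCommGroup N] [Module Bᵐᵒᵖ M] [Module Bᵐᵒᵖ N],
          Module.Finite Bᵐᵒᵖ M → Module.Finite Bᵐᵒᵖ N →
            ∀ g : M →+ N, (∀ (a : A) (m : M), g (op (f a) • m) = op (f a) • g m) →
              ∀ (b : B) (m : M), g (op b • m) = op b • g m) ∧
       (∀ (L : Type u) [AddCommGroup L] [Module Bᵐᵒᵖ L],
          ∀ ψ : B →+ L, (∀ (a : A) (b : B), ψ (b * f a) = op (f a) • ψ b) →
            ∃ P : Submodule Bᵐᵒᵖ L, P.FG ∧ ∀ b : B, ψ b ∈ P)) := by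
  refine ⟨fun hf => ⟨fun M N _ _ _ _ _ _ g hg => hf.map_smul_of_map_smul g hg,
    fun L _ _ ψ hψ => ⟨Submodule.span Bᵐᵒᵖ {ψ 1}, Submodule.fg_span_singleton _, fun b => ?_⟩⟩,
    fun ⟨hlin, hfg⟩ => IsRingEpi.of_forall_map_eq_op_smul_map_one (fun N _ _ hN g hg b => ?_) hfg⟩
  · rw [hf.map_eq_op_smul_map_one ψ hψ b]
    exact Submodule.smul_mem _ _ (Submodule.mem_span_singleton_self _)
  · simpa using hlin B N (Module.Finite.op_self B) hN g (fun a b => by simpa using hg a b) b 1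
end

section
/- Let F: 𝒜 → ℬ be an additive functor between additive categories. Then F is full if and only if for every object A of 𝒜 the induced group homomorphism F_{A,A}: Hom_𝒜(A,A) → Hom_ℬ(F(A),F(A)) is surjective. -/
open CategoryTheory CategoryTheory.Limits

/-- An additive functor `F` between additive categories is full iff for every
object `A` the induced map `Hom(A,A) → Hom(F A, F A)` is surjective. -/
theorem stmt6 {𝒜 ℬ : Type*} [Category 𝒜] [Category ℬ]
    [Preadditive 𝒜] [Preadditive ℬ]
    [HasFiniteBiproducts 𝒜] [HasFiniteBiproducts ℬ]
    (F : 𝒜 ⥤ ℬ) [F.Additive] :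
    F.Full ↔ ∀ A : 𝒜, Function.Surjective (fun g : A ⟶ A => F.map g) := by
  constructor
  · intro hF A f
    exact ⟨F.preimage f, F.map_preimage f⟩
  · intro h
    have : HasBinaryBiproducts 𝒜 := hasBinaryBiproducts_of_finite_biproducts _
    have : HasBinaryBiproducts ℬ := hasBinaryBiproducts_of_finite_biproducts _
    have : PreservesBinaryBiproducts F := preservesBinaryBiproducts_of_preservesBiproducts F
    constructor
    intro A B f
    set e := F.mapBiprod A B with he
    obtain ⟨g, hg⟩ := h (A ⊞ B)
      (e.hom ≫ biprod.fst ≫ f ≫ biprod.inr ≫ e.inv)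
    refine ⟨biprod.inl ≫ g ≫ biprod.snd, ?_⟩
    have h1 : F.map (biprod.inl : A ⟶ A ⊞ B) ≫ e.hom = biprod.inl := by
      rw [he, Functor.mapBiprod_hom]
      ext <;> simp [← F.map_comp]
    have h2 : e.inv ≫ F.map (biprod.snd : A ⊞ B ⟶ B) = biprod.snd := by
      rw [he, Functor.mapBiprod_inv]
      ext <;> simp [← F.map_comp]
    simp only [F.map_comp, hg]
    slice_lhs 1 2 => rw [h1]
    slice_lhs 5 6 => rw [h2]
    simp
end

section
/- Let S be a projective-free ring (every finitely generated projective S-module is free of unique rank) and let e₁, …, e_m ∈ M_n(S) be a complete set of orthogonal idempotents (pairwise orthogonal idempotent matrices summing to the identity). Then there exists an inner automorphism ψ of M_n(S) such that each ψ(e_i) is a diagonal 0-1 matrix; more precisely, ψ(e_i) is the block diagonal matrix with an identity block I_{r_i} in the i-th diagonal block position and zeros elsewhere, where r_i is the rank of the free module e_i·Sⁿ, and r₁ + … + r_m = n. -/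
/-!
Over a projective-free ring the image of each idempotent `e i` is free, say of rank `r i`, so
`e i = X i * Y i` with `Y i * X i = 1`. Put the `X i` side by side into `A` and stack the `Y i`
into `B`. Orthogonality gives `B * A = 1`, and `Σ e i = 1` gives `A * B = 1`, so unique rank forces
`Σ r i = n`. Since `e i = A * Pᵢ * B` for the diagonal idempotent `Pᵢ` of the `i`-th block,
conjugating by `A` turns `e i` into `Pᵢ`.
-/

universe u

open Finset Matrix MulOpposite

def IsProjectiveFree (S : Type u) [Ring S] : Prop :=
  ∀ (P : Type u) [AddCommGroup P] [Module Sᵐᵒᵖ P],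
    Module.Finite Sᵐᵒᵖ P → Module.Projective Sᵐᵒᵖ P → Module.Free Sᵐᵒᵖ P

section RightModules

variable {S : Type*} [Ring S] {m n : Type*}

def piOpLinearEquiv (ι : Type*) : (ι → S) ≃ₗ[Sᵐᵒᵖ] (ι → Sᵐᵒᵖ) :=
  LinearEquiv.piCongrRight fun _ => opLinearEquiv Sᵐᵒᵖ

instance [Finite n] : Module.Finite Sᵐᵒᵖ (n → S) :=
  Module.Finite.equiv (piOpLinearEquiv n).symm

instance [Finite n] : Module.Free Sᵐᵒᵖ (n → S) :=
  Module.Free.of_equiv (piOpLinearEquiv n).symm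

/-- The analogue of `LinearMap.toMatrix'` (which needs a commutative ring) for `Sᵐᵒᵖ`-linear maps
of column vectors, on which matrices act by `mulVec`. -/
def LinearMap.toMatrixOp' [DecidableEq n] (f : (n → S) →ₗ[Sᵐᵒᵖ] (m → S)) : Matrix m n S :=
  Matrix.of fun i j => f (Pi.single j 1) i

variable [Fintype n] [DecidableEq n]

theorem LinearMap.toMatrixOp'_mulVec (f : (n → S) →ₗ[Sᵐᵒᵖ] (m → S)) (v : n → S) :
    f.toMatrixOp' *ᵥ v = f v := by
  have hv : v = ∑ j, op (v j) • Pi.single j 1 := by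
    ext k
    simp [Finset.sum_apply, Pi.single_apply, smul_eq_mul_unop]
  conv_rhs => rw [hv]
  ext i
  simp [mulVec, dotProduct, LinearMap.toMatrixOp', Finset.sum_apply, smul_eq_mul_unop]

theorem LinearMap.toMatrixOp'_comp {l : Type*} [Fintype m] [DecidableEq m]
    (f : (m → S) →ₗ[Sᵐᵒᵖ] (l → S)) (g : (n → S) →ₗ[Sᵐᵒᵖ] (m → S)) :
    (f ∘ₗ g).toMatrixOp' = f.toMatrixOp' * g.toMatrixOp' :=
  ext_of_mulVec_single fun j => by
    rw [← mulVec_mulVec, LinearMap.toMatrixOp'_mulVec, LinearMap.toMatrixOp'_mulVec,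
      LinearMap.toMatrixOp'_mulVec, LinearMap.comp_apply]

omit [Fintype n] in
@[simp]
theorem LinearMap.toMatrixOp'_id :
    (LinearMap.id : (n → S) →ₗ[Sᵐᵒᵖ] (n → S)).toMatrixOp' = 1 := by
  ext i j
  simp [LinearMap.toMatrixOp', Pi.single_apply, one_apply]

@[simp]
theorem Matrix.toMatrixOp'_mulVecBilin (M : Matrix m n S) :
    (mulVecBilin S Sᵐᵒᵖ M).toMatrixOp' = M := by
  ext i j
  simp [LinearMap.toMatrixOp', mulVec_single]

theorem Matrix.nonempty_linearEquiv_of_mul_eq_one [Fintype m] [DecidableEq m]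
    {A : Matrix m n S} {B : Matrix n m S} (hAB : A * B = 1) (hBA : B * A = 1) :
    Nonempty ((n → S) ≃ₗ[Sᵐᵒᵖ] (m → S)) :=
  ⟨.ofLinearMap (mulVecBilin S Sᵐᵒᵖ A) (mulVecBilin S Sᵐᵒᵖ B)
    (LinearMap.ext fun v => by simp [mulVec_mulVec, hAB])
    (LinearMap.ext fun v => by simp [mulVec_mulVec, hBA])⟩

end RightModules

/-- The factorisation is through the image of `e`, which is projective as a direct summand of
`Sⁿ`, hence free. -/
theorem Matrix.exists_mul_eq_and_mul_eq_one_of_isIdempotentElem {S : Type u} [Ring S]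
    (hS : IsProjectiveFree S) {n : ℕ} {e : Matrix (Fin n) (Fin n) S} (he : IsIdempotentElem e) :
    ∃ (r : ℕ) (X : Matrix (Fin n) (Fin r) S) (Y : Matrix (Fin r) (Fin n) S),
      X * Y = e ∧ Y * X = 1 := by
  set π := mulVecBilin S Sᵐᵒᵖ e
  have hπ : ∀ v, π (π v) = π v := fun v => by simp [π, mulVec_mulVec, he.eq]
  let P := LinearMap.range π
  have hretract : ∀ p : P, π.rangeRestrict p = p := by
    rintro ⟨_, v, rfl⟩
    exact Subtype.ext (hπ v)
  have : Module.Projective Sᵐᵒᵖ P := .of_split P.subtype π.rangeRestrict (LinearMap.ext hretract)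
  have : Module.Free Sᵐᵒᵖ P := hS P (.range π) this
  let φ : P ≃ₗ[Sᵐᵒᵖ] (Fin _ → S) :=
    ((Module.Free.chooseBasis Sᵐᵒᵖ P).reindex (Fintype.equivFin _)).equivFun.trans
      (piOpLinearEquiv _).symm
  have hsplit : (P.subtype ∘ₗ φ.symm.toLinearMap) ∘ₗ (φ.toLinearMap ∘ₗ π.rangeRestrict) = π :=
    LinearMap.ext fun v => by simp
  have hsection : (φ.toLinearMap ∘ₗ π.rangeRestrict) ∘ₗ (P.subtype ∘ₗ φ.symm.toLinearMap) =
      LinearMap.id :=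
    LinearMap.ext fun v => by simp [hretract]
  refine ⟨_, (P.subtype ∘ₗ φ.symm.toLinearMap).toMatrixOp',
    (φ.toLinearMap ∘ₗ π.rangeRestrict).toMatrixOp', ?_, ?_⟩
  · rw [← LinearMap.toMatrixOp'_comp, hsplit, toMatrixOp'_mulVecBilin]
  · rw [← LinearMap.toMatrixOp'_comp, hsection, LinearMap.toMatrixOp'_id]

namespace Matrix

theorem mul_eq_zero_of_mul_mul_eq_zero {S : Type*} [Ring S] {n k k' : Type*} [Fintype n]
    [Fintype k] [DecidableEq k] [Fintype k'] [DecidableEq k'] {X : Matrix n k S}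
    {Y : Matrix k n S} {X' : Matrix n k' S} {Y' : Matrix k' n S} (hYX : Y * X = 1)
    (hY'X' : Y' * X' = 1) (h : X * Y * (X' * Y') = 0) : Y * X' = 0 :=
  calc Y * X' = Y * X * (Y * X') * (Y' * X') := by
        rw [hYX, hY'X', Matrix.one_mul, Matrix.mul_one]
    _ = Y * (X * Y * (X' * Y')) * X' := by simp only [Matrix.mul_assoc]
    _ = 0 := by rw [h, Matrix.mul_zero, Matrix.zero_mul]

theorem exists_units_conj_eq_submatrix {S : Type*} [Ring S] {n κ : Type*} [Fintype n]
    [DecidableEq n] [Fintype κ] [DecidableEq κ] {A : Matrix n κ S} {B : Matrix κ n S}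
    (hAB : A * B = 1) (hBA : B * A = 1) (τ : κ ≃ n) :
    ∃ U : (Matrix n n S)ˣ, ∀ M, U⁻¹.val * M * U.val = (B * M * A).submatrix τ.symm τ.symm := by
  refine ⟨⟨A.submatrix id τ.symm, B.submatrix τ.symm id, ?_, ?_⟩, fun M => ?_⟩
  · rw [submatrix_mul_equiv, hAB, submatrix_id_id]
  · rw [← submatrix_mul _ _ _ _ _ Function.bijective_id, hBA, submatrix_one_equiv]
  · show B.submatrix τ.symm id * M * A.submatrix id τ.symm = _
    rw [← submatrix_id_id M, ← submatrix_mul _ _ _ _ _ Function.bijective_id,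
      ← submatrix_mul _ _ _ _ _ Function.bijective_id, submatrix_id_id]

section Blocks

variable {S : Type*} {ι : Type*} {d : ι → Type*} {n : Type*}

def sigmaCols (X : ∀ i, Matrix n (d i) S) : Matrix n (Σ i, d i) S :=
  Matrix.of fun j p => X p.1 j p.2

def sigmaRows (Y : ∀ i, Matrix (d i) n S) : Matrix (Σ i, d i) n S :=
  Matrix.of fun p k => Y p.1 p.2 k

@[simp]
theorem sigmaCols_apply (X : ∀ i, Matrix n (d i) S) (j : n) (p : Σ i, d i) :
    sigmaCols X j p = X p.1 j p.2 := rfl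

@[simp]
theorem sigmaRows_apply (Y : ∀ i, Matrix (d i) n S) (p : Σ i, d i) (k : n) :
    sigmaRows Y p k = Y p.1 p.2 k := rfl

variable [Ring S]

variable (S d) in
def blockIdempotent [DecidableEq ι] [∀ i, DecidableEq (d i)] (k : ι) :
    Matrix (Σ i, d i) (Σ i, d i) S :=
  diagonal fun p => if p.1 = k then 1 else 0

theorem sum_blockIdempotent [Fintype ι] [DecidableEq ι] [∀ i, DecidableEq (d i)] :
    ∑ k, blockIdempotent S d k = 1 := by
  ext p q
  simp [blockIdempotent, Matrix.sum_apply, diagonal_apply, one_apply]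

theorem sigmaCols_mul_blockIdempotent_mul_sigmaRows [Fintype ι] [DecidableEq ι]
    [∀ i, Fintype (d i)] [∀ i, DecidableEq (d i)] (X : ∀ i, Matrix n (d i) S)
    (Y : ∀ i, Matrix (d i) n S) (k : ι) :
    sigmaCols X * blockIdempotent S d k * sigmaRows Y = X k * Y k := by
  ext j l
  rw [blockIdempotent, Matrix.mul_apply, Fintype.sum_sigma, Fintype.sum_eq_single k,
    Matrix.mul_apply]
  · simp
  · intro i hi
    simp [hi]

theorem sigmaRows_mul_sigmaCols_apply [Fintype n] (X : ∀ i, Matrix n (d i) S)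
    (Y : ∀ i, Matrix (d i) n S) (p q : Σ i, d i) :
    (sigmaRows Y * sigmaCols X) p q = (Y p.1 * X q.1) p.2 q.2 := rfl

theorem sigmaRows_mul_sigmaCols_eq_one [Fintype n] [DecidableEq ι] [∀ i, DecidableEq (d i)]
    {X : ∀ i, Matrix n (d i) S} {Y : ∀ i, Matrix (d i) n S} (hYX : ∀ i, Y i * X i = 1)
    (hYX_ne : ∀ i j, i ≠ j → Y i * X j = 0) : sigmaRows Y * sigmaCols X = 1 := by
  ext ⟨i, t⟩ ⟨j, t'⟩
  rw [sigmaRows_mul_sigmaCols_apply]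
  by_cases h : i = j
  · subst h
    simp [hYX, one_apply]
  · simp [hYX_ne i j h, h]

end Blocks

end Matrix

theorem val_finSigmaFinEquiv {m : ℕ} {r : Fin m → ℕ} (p : (i : Fin m) × Fin (r i)) :
    (finSigmaFinEquiv p : ℕ) = ∑ l ∈ Iio p.1, r l + p.2 := by
  rw [finSigmaFinEquiv_apply]
  congr 1
  refine (sum_map univ (Fin.castLEEmb p.1.2.le) r).symm.trans (congrArg (Finset.sum · r) ?_)
  ext l
  simp only [mem_map, mem_univ, true_and, mem_Iio, Fin.castLEEmb_apply]
  exact ⟨fun ⟨k, hk⟩ => hk ▸ k.2, fun h => ⟨⟨l, h⟩, rfl⟩⟩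

theorem finSigmaFinEquiv_symm_fst_eq_iff {m : ℕ} {r : Fin m → ℕ} (j : Fin (∑ i, r i))
    (i : Fin m) :
    (finSigmaFinEquiv.symm j).1 = i ↔ ∑ l ∈ Iio i, r l ≤ j ∧ (j : ℕ) < ∑ l ∈ Iic i, r l := by
  have hmono : ∀ {i i' : Fin m}, i < i' → ∑ l ∈ Iic i, r l ≤ ∑ l ∈ Iio i', r l := fun h =>
    sum_le_sum_of_subset fun l hl => mem_Iio.2 ((mem_Iic.1 hl).trans_lt h)
  obtain ⟨⟨i', t⟩, rfl⟩ := finSigmaFinEquiv.surjective j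
  rw [Equiv.symm_apply_apply, val_finSigmaFinEquiv, ← sum_Iio_add_eq_sum_Iic]
  have ht := t.isLt
  rcases lt_trichotomy i' i with h | rfl | h
  · have := hmono h
    rw [← sum_Iio_add_eq_sum_Iic] at this
    simp only [h.ne, false_iff]
    omega
  · simp
  · have := hmono h
    rw [← sum_Iio_add_eq_sum_Iic] at this
    simp only [h.ne', false_iff]
    omega

/-- Let `S` be a projective-free ring (every finitely generated projective right
`S`-module is free, and free modules have unique rank), and let `e 1, …, e m` be a complete set of
orthogonal idempotents in `Mₙ(S)`. Then there are ranks `r i` with `Σ r i = n`, the column module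
of each `e i` is free of rank `r i` (witnessed by matrices `X`, `Y`), and an inner automorphism
(conjugation by a unit `U`) taking each `e i` to the 0-1 diagonal matrix whose identity block
`I_{r i}` sits in the `i`-th diagonal block position. -/
theorem stmt7 {S : Type u} [Ring S] {n m : ℕ}
    (hprojfree : ∀ (P : Type u) [AddCommGroup P] [Module Sᵐᵒᵖ P],
      Module.Finite Sᵐᵒᵖ P → Module.Projective Sᵐᵒᵖ P → Module.Free Sᵐᵒᵖ P)
    (huniquerank : ∀ a b : ℕ, Nonempty ((Fin a → S) ≃ₗ[Sᵐᵒᵖ] (Fin b → S)) → a = b)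
    (e : Fin m → Matrix (Fin n) (Fin n) S)
    (hidem : ∀ i, e i * e i = e i)
    (horth : ∀ i j, i ≠ j → e i * e j = 0)
    (hsum : ∑ i, e i = 1) :
    ∃ (r : Fin m → ℕ) (U : (Matrix (Fin n) (Fin n) S)ˣ),
      (∑ i, r i = n) ∧
      (∀ i, ∃ (X : Matrix (Fin n) (Fin (r i)) S) (Y : Matrix (Fin (r i)) (Fin n) S),
        X * Y = e i ∧ Y * X = 1) ∧
      (∀ i, ((U⁻¹).val * e i * U.val) =
        Matrix.of fun (j k : Fin n) =>
          if j = k ∧ (∑ l ∈ Finset.univ.filter (fun l => l < i), r l) ≤ (j : ℕ) ∧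
              (j : ℕ) < ∑ l ∈ Finset.univ.filter (fun l => l ≤ i), r l
          then 1 else 0) := by
  choose r X Y hXY hYX using fun i =>
    exists_mul_eq_and_mul_eq_one_of_isIdempotentElem hprojfree (hidem i)
  have hYX_ne : ∀ i j, i ≠ j → Y i * X j = 0 := fun i j hij =>
    mul_eq_zero_of_mul_mul_eq_zero (hYX i) (hYX j) (by rw [hXY, hXY, horth i j hij])
  have hfactor : ∀ i, e i = sigmaCols X * blockIdempotent S (fun i => Fin (r i)) i * sigmaRows Y :=
    fun i => by rw [sigmaCols_mul_blockIdempotent_mul_sigmaRows, hXY]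
  have hAB : sigmaCols X * sigmaRows Y = 1 := by
    rw [← hsum, ← Matrix.mul_one (sigmaCols X), ← sum_blockIdempotent, Matrix.mul_sum,
      Matrix.sum_mul]
    simp_rw [hfactor]
  have hBA := sigmaRows_mul_sigmaCols_eq_one hYX hYX_ne
  have hdiag : ∀ i, sigmaRows Y * e i * sigmaCols X = blockIdempotent S _ i := fun i => by
    rw [hfactor, ← Matrix.mul_assoc, ← Matrix.mul_assoc, hBA, Matrix.one_mul, Matrix.mul_assoc,
      hBA, Matrix.mul_one]
  have hrank : ∑ i, r i = n := huniquerank _ _ <|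
    (nonempty_linearEquiv_of_mul_eq_one hAB hBA).map
      (LinearEquiv.funCongrLeft Sᵐᵒᵖ S finSigmaFinEquiv).trans
  subst hrank
  obtain ⟨U, hU⟩ := exists_units_conj_eq_submatrix hAB hBA finSigmaFinEquiv
  refine ⟨r, U, rfl, fun i => ⟨X i, Y i, hXY i, hYX i⟩, fun i => ?_⟩
  rw [hU, hdiag, blockIdempotent, submatrix_diagonal_equiv, filter_gt_eq_Iio, filter_ge_eq_Iic]
  ext j k
  simp [diagonal_apply, finSigmaFinEquiv_symm_fst_eq_iff, ite_and]
end

section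
/- Let k be an algebraically closed field, A a finite-dimensional k-algebra (e.g. a path algebra of a finite acyclic quiver), and B a finite-dimensional right A-module with End_A(B) ≅ k (a brick). Then the natural ring homomorphism f_B: A → End_k(B) giving the module structure of B is a ring epimorphism. -/
/-!
Let `E = End_k(B)` and let `g₁, g₂ : E → T` agree on the image of `A`; make `T` an `E`-module
through `g₂`. Since `E` is a simple artinian ring whose simple module is `B`, every `E`-module is
a direct sum of copies of `B`, so its points are separated by `E`-linear maps to `B`. For a
functional `f`, the additive map `ψ_f : b ↦ g₁ (f(-) • b)` is `A`-linear; composed with any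
`E`-linear map to `B` it is an `A`-endomorphism of the brick `B`, hence a scalar, and this forces
`ψ_f` to be `E`-linear: `g₁ (s ∘ f(-) • b) = g₂ s * g₁ (f(-) • b)`. Summing over the rank-one
operators `b_i^*(-) • b_i`, which add up to `1`, gives `g₁ s = g₂ s`.
-/

universe u

open MulOpposite

namespace LinearMap

variable {R M : Type*} [CommSemiring R] [AddCommMonoid M] [Module R M]

theorem mul_smulRight (s : Module.End R M) (f : M →ₗ[R] R) (v : M) :
    s * smulRight f v = smulRight f (s v) := by
  ext x
  simp

theorem sum_smulRight_coord {ι : Type*} [Fintype ι] (b : Module.Basis ι R M) :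
    ∑ i, smulRight (b.coord i) (b i) = 1 := by
  ext x
  simp [b.sum_repr x]

end LinearMap

theorem RingHom.eq_of_map_smulRight {R M T : Type*} [CommRing R] [AddCommGroup M] [Module R M]
    [Module.Free R M] [Module.Finite R M] [Ring T] (g₁ g₂ : Module.End R M →+* T)
    (h : ∀ (s : Module.End R M) (f : M →ₗ[R] R) (v : M),
      g₁ (LinearMap.smulRight f (s v)) = g₂ s * g₁ (LinearMap.smulRight f v)) :
    g₁ = g₂ := by
  ext s
  let b := Module.Free.chooseBasis R M
  calc g₁ s = g₁ (s * ∑ i, LinearMap.smulRight (b.coord i) (b i)) := by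
        rw [LinearMap.sum_smulRight_coord, mul_one]
    _ = g₂ s * g₁ (∑ i, LinearMap.smulRight (b.coord i) (b i)) := by
        simp only [Finset.mul_sum, map_sum, LinearMap.mul_smulRight, h]
    _ = g₂ s := by rw [LinearMap.sum_smulRight_coord, map_one, mul_one]

namespace Module.End

variable {k V : Type u} [Field k] [AddCommGroup V] [Module k V] [FiniteDimensional k V]

instance instIsSimpleRing [Nontrivial V] : IsSimpleRing (Module.End k V) := by
  classical
  let b := Module.Free.chooseBasis k V
  have := b.index_nonempty
  exact IsSimpleRing.of_ringEquiv (LinearMap.toMatrixAlgEquiv b).symm.toRingEquiv inferInstance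

theorem isIsotypicOfType [Nontrivial V] (N : Type u) [AddCommGroup N]
    [Module (Module.End k V) N] : IsIsotypicOfType (Module.End k V) N V := fun m _ ↦ by
  have := IsArtinianRing.of_finite k (Module.End k V)
  obtain ⟨I, ⟨e⟩⟩ := IsSemisimpleRing.exists_linearEquiv_ideal_of_isSimpleModule (Module.End k V) m
  obtain ⟨J, ⟨e'⟩⟩ := IsSemisimpleRing.exists_linearEquiv_ideal_of_isSimpleModule (Module.End k V) V
  have := IsSimpleModule.congr e.symm
  have := IsSimpleModule.congr e'.symm
  exact ⟨e.trans <| (IsSimpleRing.isIsotypic _ _ J I).some.trans e'.symm⟩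

theorem exists_linearMap_apply_ne_zero {N : Type u} [AddCommGroup N]
    [Module (Module.End k V) N] {y : N} (hy : y ≠ 0) :
    ∃ χ : N →ₗ[Module.End k V] V, χ y ≠ 0 := by
  have : Nontrivial V := by
    by_contra hV
    rw [not_nontrivial_iff_subsingleton] at hV
    exact hy ((Module.subsingleton (Module.End k V) N).elim y 0)
  have := IsSemisimpleRing.moduleEnd (R := k) (M := V)
  obtain ⟨ι, ⟨e⟩⟩ := (isIsotypicOfType (k := k) (V := V) N).linearEquiv_finsupp
  obtain ⟨i, hi⟩ : ∃ i, e y i ≠ 0 := by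
    by_contra! h
    exact hy (e.map_eq_zero_iff.mp (Finsupp.ext h))
  exact ⟨Finsupp.lapply i ∘ₗ e.toLinearMap, hi⟩

end Module.End

section Brick

variable {k V R : Type u} [Field k] [AddCommGroup V] [Module k V] [Ring R]

def IsBrick (ρ : R →+* Module.End k V) : Prop :=
  ∀ φ : V →+ V, (∀ r x, φ (ρ r x) = ρ r (φ x)) → ∃ c : k, ∀ x, φ x = c • x

theorem IsBrick.map_apply_eq_smul [FiniteDimensional k V] {ρ : R →+* Module.End k V}
    (hρ : IsBrick ρ) {N : Type u} [AddCommGroup N] [Module (Module.End k V) N] (ψ : V →+ N)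
    (hψ : ∀ r x, ψ (ρ r x) = ρ r • ψ x) (s : Module.End k V) (x : V) :
    ψ (s x) = s • ψ x := by
  by_contra h
  obtain ⟨χ, hχ⟩ :=
    Module.End.exists_linearMap_apply_ne_zero (k := k) (V := V) (sub_ne_zero.mpr h)
  obtain ⟨c, hc⟩ := hρ (χ.toAddMonoidHom.comp ψ) fun r x ↦ by simp [hψ]
  simp only [AddMonoidHom.coe_comp, LinearMap.toAddMonoidHom_coe, Function.comp_apply] at hc
  apply hχ
  rw [map_sub, map_smul, hc, hc, Module.End.smul_def, map_smul, sub_self]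

theorem IsBrick.isRingEpi [FiniteDimensional k V] {ρ : R →+* Module.End k V} (hρ : IsBrick ρ) :
    IsRingEpi ρ := by
  intro T _ g₁ g₂ hg
  let : Module (Module.End k V) T := Module.compHom T g₂
  refine RingHom.eq_of_map_smulRight g₁ g₂ fun s f v ↦ ?_
  refine hρ.map_apply_eq_smul (g₁.toAddMonoidHom.comp (LinearMap.smulRightₗ f).toAddMonoidHom)
    (fun r x ↦ ?_) s v
  change g₁ (LinearMap.smulRight f (ρ r x)) = g₂ (ρ r) * g₁ (LinearMap.smulRight f x)
  rw [← LinearMap.mul_smulRight, map_mul, ← RingHom.comp_apply, hg, RingHom.comp_apply]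

theorem isBrick_toModuleEnd {A : Type u} [Ring A] [Module Aᵐᵒᵖ V] [SMulCommClass Aᵐᵒᵖ k V]
    (hbrick : ∀ φ : V →ₗ[Aᵐᵒᵖ] V, ∃ c : k, ∀ x : V, φ x = c • x) :
    IsBrick (Module.toModuleEnd k V : Aᵐᵒᵖ →+* Module.End k V) :=
  fun φ hφ ↦ hbrick { φ with map_smul' := hφ }

end Brick

theorem stmt11_general {k A B : Type u} [Field k]
    [Ring A]
    [AddCommGroup B] [Module k B] [FiniteDimensional k B]
    [Module Aᵐᵒᵖ B] [SMulCommClass Aᵐᵒᵖ k B]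
    (hbrick : ∀ φ : B →ₗ[Aᵐᵒᵖ] B, ∃ c : k, ∀ x : B, φ x = c • x) :
    IsRingEpi (Module.toModuleEnd k B : Aᵐᵒᵖ →+* Module.End k B) :=
  (isBrick_toModuleEnd hbrick).isRingEpi

/-- **Proposition 19, (i) ⇒ (ii), epimorphism part.** Let `k` be an algebraically
closed field, `A` a finite-dimensional `k`-algebra, and `B` a finite-dimensional right
`A`-module which is a brick, i.e. every `A`-linear endomorphism of `B` is a scalar. Then the
natural homomorphism `f_B : A → End_k(B)` recording the right action of `A` on `B` (an honest
ring homomorphism out of `Aᵐᵒᵖ`) is a ring epimorphism. -/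
theorem stmt11 {k A B : Type u} [Field k] [IsAlgClosed k]
    [Ring A] [Algebra k A] [FiniteDimensional k A]
    [AddCommGroup B] [Module k B] [FiniteDimensional k B]
    [Module Aᵐᵒᵖ B] [SMulCommClass Aᵐᵒᵖ k B]
    (hbrick : ∀ φ : B →ₗ[Aᵐᵒᵖ] B, ∃ c : k, ∀ x : B, φ x = c • x) :
    IsRingEpi (Module.toModuleEnd k B : Aᵐᵒᵖ →+* Module.End k B) :=
  stmt11_general hbrick
end

section
/- Let f: A → M_n(B) be a homomorphism of k-algebras, where k is a field. Then f is a ring epimorphism if and only if the two-sided ideal I_f of the coproduct (free product over k) B *_k k⟨(v_{ij})_{i,j=1}^n⟩ generated by the entries of the matrix commutators V·f(a) − f(a)·V (for all a ∈ A, where V = (v_{ij})) contains the elements v_{ii} − v_{jj}, v_{i'j'} (for i' ≠ j'), and b·v_{ii} − v_{ii}·b, for all i, j, i' ≠ j' ∈ {1,…,n} and all b ∈ B. -/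
/-!
Conjugating by the unit `[[1, w], [0, 1]]` of a 2×2 matrix ring turns "`w` commutes with the
image of `g`" into "two ring maps agree". So if `f` is an epimorphism, the image `W` of `V` in
`C ⧸ I_f`, which commutes with `f(A)` by construction, commutes with all of `Mₙ(B)`; that makes
`W` a scalar matrix over the commutant of `B`, which is what the three relations say.

Conversely, given `g₁ g₂ : Mₙ(B) → T` agreeing on `f(A)`, send `ιB b ↦ diag(g₁ b, g₂ b)` and
`V ↦ [[0, X], [0, 0]]` in `M₂(T)`, with `X i j = ∑ p, g₁ (e p i) * g₂ (e j p)`. This kills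
`I_f`, so the relations hold for `X`, and they force `X = 1` and then `g₁ = g₂`.
-/

universe u

/-- The ideal `I_f` of the coproduct `C = B *_k k⟨v_{ij}⟩`: the two-sided ideal generated by the
entries of the matrix commutators `V·f(a) − f(a)·V` for all `a : A`. -/
def commutatorIdeal {k A B C : Type u} [Field k]
    [Ring A] [Algebra k A] [Ring B] [Algebra k B] [Ring C] [Algebra k C] {n : ℕ}
    (ιB : B →ₐ[k] C) (V : Fin n → Fin n → C)
    (f : A →ₐ[k] Matrix (Fin n) (Fin n) B) : TwoSidedIdeal C :=
  TwoSidedIdeal.span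
    {x : C | ∃ (a : A) (i j : Fin n),
      x = ∑ l, V i l * ιB (f a l j) - ∑ l, ιB (f a i l) * V l j}

namespace Matrix

variable {m n α : Type*} [DecidableEq m] [DecidableEq n]

theorem single_injective [Zero α] (i : m) (j : n) :
    Function.Injective (single i j : α → Matrix m n α) := fun a b h => by
  simpa using congrFun (congrFun h i) j

theorem single_sum [AddCommMonoid α] {ι : Type*} (i : m) (j : n) (s : Finset ι) (x : ι → α) :
    single i j (∑ l ∈ s, x l) = ∑ l ∈ s, single i j (x l) :=
  map_sum (singleAddMonoidHom i j) x s

theorem diagonal_mul_single [Fintype m] [NonUnitalNonAssocSemiring α] (d : m → α) (i : m) (j : n)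
    (x : α) : diagonal d * single i j x = single i j (d i * x) := by
  ext a b
  simp only [diagonal_mul, single_apply]
  split_ifs with h
  · rw [h.1]
  · rw [mul_zero]

theorem single_mul_diagonal [Fintype n] [NonUnitalNonAssocSemiring α] (i : m) (j : n) (x : α)
    (d : n → α) : single i j x * diagonal d = single i j (x * d j) := by
  ext a b
  simp only [mul_diagonal, single_apply]
  split_ifs with h
  · rw [h.2]
  · rw [zero_mul]

variable [Fintype n] [NonAssocSemiring α]

theorem mul_single_one (M : Matrix n n α) (j p : n) :
    M * single j p 1 = ∑ l, single l p (M l j) := by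
  ext a b
  by_cases hp : p = b <;> simp [sum_apply, single_apply, mul_apply, hp]

theorem single_one_mul (M : Matrix n n α) (p i : n) :
    single p i 1 * M = ∑ l, single p l (M i l) := by
  ext a b
  by_cases hp : p = a <;> simp [sum_apply, single_apply, mul_apply, hp]

theorem ringHom_ext {β : Type*} [NonAssocSemiring β] {g₁ g₂ : Matrix n n α →+* β}
    (h : ∀ i j r, g₁ (single i j r) = g₂ (single i j r)) : g₁ = g₂ :=
  RingHom.coe_addMonoidHom_injective <| ext_addMonoidHom fun i j => AddMonoidHom.ext (h i j)

end Matrix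

open Matrix

theorem IsRingEpi.commute_of_commute_s13 {A B R : Type u} [Ring A] [Ring B] [Ring R]
    {f : A →+* B} (hf : IsRingEpi f) (g : B →+* R) {w : R}
    (hw : ∀ a, Commute w (g (f a))) (b : B) : Commute w (g b) := by
  have hs : single (0 : Fin 2) (1 : Fin 2) w * single 0 1 w = 0 :=
    single_mul_single_of_ne _ _ _ _ (by decide) _
  let U : (Matrix (Fin 2) (Fin 2) R)ˣ :=
    ⟨1 + single 0 1 w, 1 - single 0 1 w, by simp [add_mul, mul_sub, hs],
      by simp [sub_mul, mul_add, hs]⟩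
  have key : ∀ r, Commute w r ↔ Commute (U : Matrix (Fin 2) (Fin 2) R) (scalar _ r) := by
    intro r
    simp only [U, commute_iff_eq, add_mul, mul_add, one_mul, mul_one, add_right_inj, scalar_apply,
      single_mul_diagonal, diagonal_mul_single, (single_injective _ _).eq_iff]
  let g₁ := (scalar (Fin 2)).comp g
  let g₂ := (MulSemiringAction.toRingHom _ _ (ConjAct.toConjAct U)).comp g₁
  have hg₂ : ∀ b, g₂ b = U.val * g₁ b * U⁻¹.val := fun b => ConjAct.units_smul_def _ _
  have hg : g₁ = g₂ := hf g₁ g₂ <| RingHom.ext fun a => by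
    simp only [RingHom.comp_apply, hg₂, g₁, ((key _).mp (hw a)).eq, Units.mul_inv_cancel_right]
  rw [key, commute_iff_eq]
  exact (Units.mul_inv_eq_iff_eq_mul U).mp ((hg₂ b).symm.trans (RingHom.congr_fun hg b).symm)

/- A test ring `T` need not be a `k`-algebra, but the centralizer of `g₁(k)` is one, and it
contains the images of both maps. -/
theorem isRingEpi_of_forall_algHom {k A B : Type u} [CommRing k] [Ring A] [Algebra k A] [Ring B]
    [Algebra k B] (f : A →ₐ[k] B)
    (h : ∀ ⦃T : Type u⦄ [Ring T] [Algebra k T] (g₁ g₂ : B →ₐ[k] T),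
      g₁.comp f = g₂.comp f → g₁ = g₂) :
    IsRingEpi f.toRingHom := by
  intro T _ g₁ g₂ hfg
  let S := Subring.centralizer (Set.range (g₁.comp (algebraMap k B)))
  have hk : ∀ c, g₂ (algebraMap k B c) = g₁ (algebraMap k B c) := fun c => by
    simpa using (RingHom.congr_fun hfg (algebraMap k A c)).symm
  have hmem : ∀ g : B →+* T, (∀ c, g (algebraMap k B c) = g₁ (algebraMap k B c)) →
      ∀ b, g b ∈ S := by
    rintro g hg b _ ⟨c, rfl⟩
    simp only [RingHom.comp_apply, ← hg c, ← map_mul, Algebra.commutes]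
  let φ : k →+* S := (g₁.comp (algebraMap k B)).codRestrict S fun c => hmem g₁ (fun _ => rfl) _
  let _ : Algebra k S := φ.toAlgebra' fun c s => Subtype.ext (s.2 _ ⟨c, rfl⟩)
  let lift (g : B →+* T) (hg : ∀ c, g (algebraMap k B c) = g₁ (algebraMap k B c)) :
      B →ₐ[k] S :=
    { g.codRestrict S (hmem g hg) with commutes' := fun c => Subtype.ext (hg c) }
  have := h (lift g₁ fun _ => rfl) (lift g₂ hk) <|
    AlgHom.ext fun a => Subtype.ext (RingHom.congr_fun hfg a)
  ext b
  exact congrArg Subtype.val (AlgHom.congr_fun this b)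

section Intertwiner

variable {n B T : Type*} [Fintype n] [DecidableEq n] [Ring B] [Ring T]
  (g₁ g₂ : Matrix n n B →+* T)

def intertwiner (i j : n) : T := ∑ p, g₁ (single p i 1) * g₂ (single j p 1)

theorem single_mul_intertwiner (a b i j : n) :
    g₁ (single a b 1) * intertwiner g₁ g₂ i j = g₁ (single a i 1) * g₂ (single j b 1) := by
  rw [intertwiner, Finset.mul_sum, Finset.sum_eq_single b]
  · rw [← mul_assoc, ← map_mul, single_mul_single_same, one_mul]
  · intro p _ hp
    rw [← mul_assoc, ← map_mul, single_mul_single_of_ne _ _ _ _ hp.symm, map_zero, zero_mul]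
  · simp

theorem sum_intertwiner_mul (m : Matrix n n B) (i j : n) :
    ∑ l, intertwiner g₁ g₂ i l * g₂ (scalar n (m l j)) =
      ∑ p, g₁ (single p i 1) * g₂ m * g₂ (single j p 1) := by
  simp only [intertwiner, Finset.sum_mul, mul_assoc]
  rw [Finset.sum_comm]
  refine Finset.sum_congr rfl fun p _ => ?_
  rw [← Finset.mul_sum, ← map_mul, mul_single_one, map_sum]
  simp only [← map_mul, scalar_apply, single_mul_diagonal, one_mul]

theorem sum_mul_intertwiner (m : Matrix n n B) (i j : n) :
    ∑ l, g₁ (scalar n (m i l)) * intertwiner g₁ g₂ l j =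
      ∑ p, g₁ (single p i 1) * g₁ m * g₂ (single j p 1) := by
  simp only [intertwiner, Finset.mul_sum, ← mul_assoc]
  rw [Finset.sum_comm]
  refine Finset.sum_congr rfl fun p _ => ?_
  rw [← Finset.sum_mul, ← map_mul, single_one_mul, map_sum]
  simp only [← map_mul, scalar_apply, diagonal_mul_single, mul_one]

theorem eq_of_intertwiner (hoff : ∀ i j, i ≠ j → intertwiner g₁ g₂ i j = 0)
    (hdiag : ∀ i j, intertwiner g₁ g₂ i i = intertwiner g₁ g₂ j j)
    (hscalar : ∀ r i, g₁ (scalar n r) * intertwiner g₁ g₂ i i =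
      intertwiner g₁ g₂ i i * g₂ (scalar n r)) : g₁ = g₂ := by
  have hunit : ∀ j b, g₂ (single j b 1) = g₁ (single j b 1) * intertwiner g₁ g₂ j j := by
    intro j b
    calc g₂ (single j b 1) = ∑ a, g₁ (single a a 1) * g₂ (single j b 1) := by
          rw [← Finset.sum_mul, ← map_sum, sum_single_one, map_one, one_mul]
      _ = ∑ a, g₁ (single a b 1) * intertwiner g₁ g₂ a j := by
          simp only [single_mul_intertwiner]
      _ = g₁ (single j b 1) * intertwiner g₁ g₂ j j := by
          rw [Finset.sum_eq_single j (fun a _ ha => by rw [hoff a j ha, mul_zero]) (by simp)]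
  have hone : ∀ j, intertwiner g₁ g₂ j j = 1 := by
    intro j
    calc intertwiner g₁ g₂ j j = ∑ b, g₁ (single b b 1) * intertwiner g₁ g₂ b b := by
          simp only [hdiag _ j]
          rw [← Finset.sum_mul, ← map_sum, sum_single_one, map_one, one_mul]
      _ = 1 := by simp only [← hunit, ← map_sum, sum_single_one, map_one]
  refine Matrix.ringHom_ext fun i j r => ?_
  have hr := hscalar r i
  rw [hone, mul_one, one_mul] at hr
  have hij := hunit i j
  rw [hone, mul_one] at hij
  have hsingle : single i j r = scalar n r * single i j 1 := by
    rw [scalar_apply, diagonal_mul_single, mul_one]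
  rw [hsingle, map_mul, map_mul, hr, hij]

end Intertwiner

section CommutatorIdeal

variable {k A B C : Type u} [Field k] [Ring A] [Algebra k A] [Ring B] [Algebra k B] [Ring C]
  [Algebra k C] {n : ℕ} (ιB : B →ₐ[k] C) (V : Fin n → Fin n → C)
  (f : A →ₐ[k] Matrix (Fin n) (Fin n) B)

theorem commutatorIdeal_le_ker_iff {D : Type*} [Ring D] (π : C →+* D) :
    commutatorIdeal ιB V f ≤ TwoSidedIdeal.ker π ↔
      ∀ a, Commute (of fun i j => π (V i j)) ((π.comp ιB.toRingHom).mapMatrix (f a)) := by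
  have hgen : ∀ a i j, π (∑ l, V i l * ιB (f a l j) - ∑ l, ιB (f a i l) * V l j) =
      ((of fun i j => π (V i j)) * (π.comp ιB.toRingHom).mapMatrix (f a) -
        (π.comp ιB.toRingHom).mapMatrix (f a) * of fun i j => π (V i j)) i j := by
    simp [mul_apply]
  rw [commutatorIdeal, TwoSidedIdeal.span_le]
  refine ⟨fun h a => sub_eq_zero.mp <| Matrix.ext fun i j =>
    (hgen a i j).symm.trans ((TwoSidedIdeal.mem_ker π).mp (h ⟨a, i, j, rfl⟩)), ?_⟩
  rintro h _ ⟨a, i, j, rfl⟩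
  rw [SetLike.mem_coe, TwoSidedIdeal.mem_ker, hgen, sub_eq_zero.mpr (h a).eq, Matrix.zero_apply]

theorem mem_commutatorIdeal_of_isRingEpi (hf : IsRingEpi f.toRingHom) :
    (∀ i j : Fin n, V i i - V j j ∈ commutatorIdeal ιB V f) ∧
      (∀ i j : Fin n, i ≠ j → V i j ∈ commutatorIdeal ιB V f) ∧
      ∀ (b : B) (i : Fin n), ιB b * V i i - V i i * ιB b ∈ commutatorIdeal ιB V f := by
  set I := commutatorIdeal ιB V f
  let π := I.ringCon.mk'
  have hmem : ∀ z, z ∈ I ↔ π z = 0 := fun z => by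
    rw [← TwoSidedIdeal.mem_ker, TwoSidedIdeal.ker_ringCon_mk']
  let φ := π.comp ιB.toRingHom
  let W := of fun i j => π (V i j)
  have hW : ∀ m, Commute W (φ.mapMatrix m) := hf.commute_of_commute_s13 φ.mapMatrix <|
    (commutatorIdeal_le_ker_iff ιB V f π).mp (TwoSidedIdeal.ker_ringCon_mk' I).ge
  have hsingle : ∀ i j, Commute (single i j 1) W := fun i j => by
    simpa using (hW (single i j 1)).symm
  refine ⟨fun i j => ?_, fun i j hij => ?_, fun b i => ?_⟩
  · rw [hmem, map_sub, sub_eq_zero]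
    exact diag_eq_of_commute_single (hsingle i j)
  · rw [hmem]
    exact col_eq_zero_of_commute_single (hsingle j j) hij
  · rw [hmem, map_sub, sub_eq_zero, map_mul, map_mul]
    simpa [mul_diagonal, diagonal_mul, W, φ] using
      (congrFun (congrFun (hW (scalar _ b)).eq i) i).symm

theorem isRingEpi_of_mem_commutatorIdeal
    (hUP : ∀ (D : Type u) [Ring D] [Algebra k D] (gB : B →ₐ[k] D) (w : Fin n → Fin n → D),
      ∃! h : C →ₐ[k] D, h.comp ιB = gB ∧ ∀ i j, h (V i j) = w i j)
    (hdiag : ∀ i j : Fin n, V i i - V j j ∈ commutatorIdeal ιB V f)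
    (hoff : ∀ i j : Fin n, i ≠ j → V i j ∈ commutatorIdeal ιB V f)
    (hscalar : ∀ (b : B) (i : Fin n), ιB b * V i i - V i i * ιB b ∈ commutatorIdeal ιB V f) :
    IsRingEpi f.toRingHom := by
  refine isRingEpi_of_forall_algHom f fun T _ _ g₁ g₂ hfg => AlgHom.coe_ringHom_injective ?_
  set X := intertwiner (g₁ : Matrix (Fin n) (Fin n) B →+* T) g₂
  let σ := g₁.comp (scalarAlgHom (Fin n) k)
  let τ := g₂.comp (scalarAlgHom (Fin n) k)
  obtain ⟨h, ⟨hB, hV⟩, -⟩ := hUP (Matrix (Fin 2) (Fin 2) T)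
    ((diagonalAlgHom k).comp (AlgHom.pi ![σ, τ])) fun i j => single 0 1 (X i j)
  have hιB : ∀ b, h (ιB b) = diagonal ![σ b, τ b] := fun b => by
    rw [← AlgHom.comp_apply, hB]
    simp
  have hker : ∀ z ∈ commutatorIdeal ιB V f, h z = 0 := by
    refine fun z hz => (TwoSidedIdeal.mem_ker _).mp <|
      ((commutatorIdeal_le_ker_iff ιB V f h.toRingHom).mpr ?_) hz
    intro a
    have hfa : (g₁ : Matrix (Fin n) (Fin n) B →+* T) (f a) = g₂ (f a) := AlgHom.congr_fun hfg a
    refine (commute_iff_eq _ _).mpr <| Matrix.ext fun i j => ?_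
    simp only [AlgHom.toRingHom_eq_coe, RingHom.coe_coe, RingHom.mapMatrix_apply, RingHom.coe_comp,
      mul_apply, of_apply, map_apply, Function.comp_apply, hV, hιB, single_mul_diagonal,
      diagonal_mul_single, cons_val_zero, cons_val_one, cons_val_fin_one, ← single_sum]
    exact congrArg (single 0 1) <| (sum_intertwiner_mul _ _ (f a) i j).trans
      (hfa ▸ (sum_mul_intertwiner _ _ (f a) i j).symm)
  refine eq_of_intertwiner _ _ (fun i j hij => ?_) (fun i j => ?_) (fun b i => ?_)
  · have := hker _ (hoff i j hij)
    rwa [hV, ← single_zero, (single_injective _ _).eq_iff] at this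
  · have := hker _ (hdiag i j)
    rwa [map_sub, hV, hV, sub_eq_zero, (single_injective _ _).eq_iff] at this
  · have := hker _ (hscalar b i)
    rwa [map_sub, map_mul, map_mul, hV, hιB, sub_eq_zero, single_mul_diagonal,
      diagonal_mul_single, (single_injective _ _).eq_iff] at this

end CommutatorIdeal

/-- **Theorem `TEpimorphismIdeal`.** Let `f : A → Mₙ(B)` be a homomorphism of
`k`-algebras, and let `C` together with `ιB : B → C` and the elements `V i j` be the coproduct
`B *_k k⟨(v_{ij})⟩` (characterized by its universal property). Then `f` is a ring epimorphism
iff the ideal `I_f` generated by the entries of the commutators `V·f(a) − f(a)·V` (`a : A`)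
contains `v_{ii} − v_{jj}`, `v_{i'j'}` for `i' ≠ j'`, and `b·v_{ii} − v_{ii}·b` for every
`b : B`. -/
theorem stmt13 {k A B C : Type u} [Field k]
    [Ring A] [Algebra k A] [Ring B] [Algebra k B] [Ring C] [Algebra k C] {n : ℕ}
    (ιB : B →ₐ[k] C) (V : Fin n → Fin n → C)
    (hUP : ∀ (D : Type u) [Ring D] [Algebra k D] (gB : B →ₐ[k] D) (w : Fin n → Fin n → D),
      ∃! h : C →ₐ[k] D, h.comp ιB = gB ∧ ∀ i j, h (V i j) = w i j)
    (f : A →ₐ[k] Matrix (Fin n) (Fin n) B) :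
    IsRingEpi f.toRingHom ↔
      ((∀ i j : Fin n, V i i - V j j ∈ commutatorIdeal ιB V f) ∧
       (∀ i j : Fin n, i ≠ j → V i j ∈ commutatorIdeal ιB V f) ∧
       (∀ (b : B) (i : Fin n),
          ιB b * V i i - V i i * ιB b ∈ commutatorIdeal ιB V f)) :=
  ⟨mem_commutatorIdeal_of_isRingEpi ιB V f,
    fun ⟨hdiag, hoff, hscalar⟩ => isRingEpi_of_mem_commutatorIdeal ιB V f hUP hdiag hoff hscalar⟩
end

section
/- Let ℓ_Σ: A → A_Σ be the universal localisation of a ring A at a set Σ of maps between finitely generated projective right A-modules. Suppose f: A → B and g: B → A_Σ are ring homomorphisms with ℓ_Σ = g ∘ f. Then there exists a surjective ring homomorphism h: B_{Σ⊗_A B} → A_Σ such that g = h ∘ ℓ_{Σ⊗_A B}, where Σ⊗_A B = {σ ⊗_A B | σ ∈ Σ} and ℓ_{Σ⊗_A B}: B → B_{Σ⊗_A B} is the universal localisation of B at Σ⊗_A B. In particular, h is split by the map A_Σ → B_{Σ⊗_A B} induced by the universal property. -/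
universe u

open MulOpposite

/-- A map `σ : P → Q` of right `A`-modules is *inverted* by a ring homomorphism `g : A → T`
(i.e. `σ ⊗_A T` becomes an isomorphism of right `T`-modules): equivalently, for every right
`T`-module `M` (viewed as a right `A`-module via `g`), precomposition with `σ` is a bijection
`Hom_A(Q, M) → Hom_A(P, M)`. -/
def IsInverted {A T : Type u} [Ring A] [Ring T]
    {P Q : Type u} [AddCommGroup P] [AddCommGroup Q] [Module Aᵐᵒᵖ P] [Module Aᵐᵒᵖ Q]
    (σ : P →ₗ[Aᵐᵒᵖ] Q) (g : A →+* T) : Prop :=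
  ∀ (M : Type u) [AddCommGroup M] [Module Tᵐᵒᵖ M] [Module Aᵐᵒᵖ M],
    (∀ (a : A) (x : M), op a • x = op (g a) • x) →
      Function.Bijective (fun φ : Q →ₗ[Aᵐᵒᵖ] M => φ.comp σ)

/-- `ℓ : A₀ → L` is the universal localisation of `A₀` at the family of maps `σ i ⊗_A A₀`
(the maps of right `A`-modules `σ i` transported along `j : A → A₀`):
`ℓ` inverts every `σ i ⊗_A A₀`, and it is initial among ring homomorphisms out of `A₀`
doing so. -/
def IsULAlong {A A₀ L : Type u} [Ring A] [Ring A₀] [Ring L]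
    {ι : Type u} {P Q : ι → Type u}
    [∀ i, AddCommGroup (P i)] [∀ i, AddCommGroup (Q i)]
    [∀ i, Module Aᵐᵒᵖ (P i)] [∀ i, Module Aᵐᵒᵖ (Q i)]
    (σ : ∀ i, P i →ₗ[Aᵐᵒᵖ] Q i) (j : A →+* A₀) (ℓ : A₀ →+* L) : Prop :=
  (∀ i, IsInverted (σ i) (ℓ.comp j)) ∧
    ∀ (T : Type u) [Ring T], ∀ g : A₀ →+* T,
      (∀ i, IsInverted (σ i) (g.comp j)) → ∃! h : L →+* T, h.comp ℓ = g

/-- `ℓ : A → L` is the universal localisation of `A` at the family `σ`. -/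
def IsUL {A L : Type u} [Ring A] [Ring L]
    {ι : Type u} {P Q : ι → Type u}
    [∀ i, AddCommGroup (P i)] [∀ i, AddCommGroup (Q i)]
    [∀ i, Module Aᵐᵒᵖ (P i)] [∀ i, Module Aᵐᵒᵖ (Q i)]
    (σ : ∀ i, P i →ₗ[Aᵐᵒᵖ] Q i) (ℓ : A →+* L) : Prop :=
  IsULAlong σ (RingHom.id A) ℓ

/-- Let `ℓ : A → Aloc` be the universal localisation of `A` at `σ`, and suppose
`ℓ = g ∘ f` for ring homomorphisms `f : A → B` and `g : B → Aloc`. Let `ℓ' : B → B'` be the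
universal localisation of `B` at `σ ⊗_A B`. Then there is a surjective ring homomorphism
`h : B' → Aloc` with `g = h ∘ ℓ'`; moreover `h` is split by the map `Aloc → B'` induced by the
universal property (the unique map `s` with `s ∘ ℓ = ℓ' ∘ f`). -/
theorem stmt15 {A B Aloc B' : Type u} [Ring A] [Ring B] [Ring Aloc] [Ring B']
    {ι : Type u} {P Q : ι → Type u}
    [∀ i, AddCommGroup (P i)] [∀ i, AddCommGroup (Q i)]
    [∀ i, Module Aᵐᵒᵖ (P i)] [∀ i, Module Aᵐᵒᵖ (Q i)]
    (hPfin : ∀ i, Module.Finite Aᵐᵒᵖ (P i)) (hPproj : ∀ i, Module.Projective Aᵐᵒᵖ (P i))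
    (hQfin : ∀ i, Module.Finite Aᵐᵒᵖ (Q i)) (hQproj : ∀ i, Module.Projective Aᵐᵒᵖ (Q i))
    (σ : ∀ i, P i →ₗ[Aᵐᵒᵖ] Q i)
    (ℓ : A →+* Aloc) (hℓ : IsUL σ ℓ)
    (f : A →+* B) (g : B →+* Aloc) (hfactor : g.comp f = ℓ)
    (ℓ' : B →+* B') (hℓ' : IsULAlong σ f ℓ') :
    ∃ h : B' →+* Aloc, Function.Surjective h ∧ h.comp ℓ' = g ∧
      ∃ s : Aloc →+* B', s.comp ℓ = ℓ'.comp f ∧ h.comp s = RingHom.id Aloc := by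
  obtain ⟨hinv, huniv⟩ := hℓ
  obtain ⟨hinv', huniv'⟩ := hℓ'
  -- h : B' → Aloc from universal property of ℓ'
  obtain ⟨h, hh, hhuniq⟩ := huniv' Aloc g (by
    intro i
    have : g.comp f = ℓ.comp (RingHom.id A) := by simpa using hfactor
    rw [this]; exact hinv i)
  -- s : Aloc → B' from universal property of ℓ
  obtain ⟨s, hs, hsuniq⟩ := huniv B' (ℓ'.comp f) (by
    intro i
    simpa using hinv' i)
  have hsℓ : s.comp ℓ = ℓ'.comp f := by simpa using hs
  -- h ∘ s = id by uniqueness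
  have hid : h.comp s = RingHom.id Aloc := by
    obtain ⟨u, hu, huuniq⟩ := huniv Aloc ℓ (by intro i; simpa using hinv i)
    have h1 : (h.comp s).comp ℓ = ℓ := by
      rw [RingHom.comp_assoc, hsℓ, ← RingHom.comp_assoc, hh, hfactor]
    have h2 : (RingHom.id Aloc).comp ℓ = ℓ := by simp
    have e1 := huuniq (h.comp s) (by simpa using h1)
    have e2 := huuniq (RingHom.id Aloc) (by simpa using h2)
    rw [e1, e2]
  refine ⟨h, ?_, hh, s, hsℓ, hid⟩
  intro x
  exact ⟨s x, by simpa using RingHom.congr_fun hid x⟩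
end

section
/- Let k be a field and let √ⁿ(−) : k-Alg → k-Alg be the left adjoint of the n×n matrix algebra functor M_n(−), with unit μ_{A,n}: A → M_n(√ⁿA). For a k-algebra homomorphism f: A → M_n(B), f is a ring epimorphism if and only if the adjoint map √ⁿf : √ⁿA → √ⁿ(M_n(B)) is a ring epimorphism. -/
universe u

def IsMatrixReduction {k S R : Type u} [Field k] [Ring S] [Algebra k S] [Ring R] [Algebra k R]
    (n : ℕ) (μ : S →ₐ[k] Matrix (Fin n) (Fin n) R) : Prop :=
  ∀ (D : Type u) [Ring D] [Algebra k D] (g : S →ₐ[k] Matrix (Fin n) (Fin n) D),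
    ∃! g' : R →ₐ[k] D, (AlgHom.mapMatrix g').comp μ = g

/-- Epimorphism test against `k`-algebra maps. -/
def IsAlgEpi {k A C : Type u} [Field k] [Ring A] [Algebra k A] [Ring C] [Algebra k C]
    (f : A →ₐ[k] C) : Prop :=
  ∀ (T : Type u) [Ring T] [Algebra k T], ∀ g₁ g₂ : C →ₐ[k] T,
    g₁.comp f = g₂.comp f → g₁ = g₂

/-- The scalar embedding `T → Mₙ(T)` as an algebra hom. -/
noncomputable def scalarAH (k T : Type u) [Field k] [Ring T] [Algebra k T] (n : ℕ) :
    T →ₐ[k] Matrix (Fin n) (Fin n) T :=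
  { Matrix.scalar (Fin n) with
    commutes' := fun r => by
      simp [Matrix.scalar, Matrix.algebraMap_eq_diagonal] }

lemma scalarAH_inj (k T : Type u) [Field k] [Ring T] [Algebra k T] {n : ℕ} (hn : 0 < n) :
    Function.Injective (scalarAH k T n) := by
  intro x y h
  have := congrArg (fun M => M ⟨0, hn⟩ ⟨0, hn⟩) h
  simpa [scalarAH, Matrix.scalar] using this

lemma ringEpi_iff_algEpi {k A C : Type u} [Field k] [Ring A] [Algebra k A] [Ring C] [Algebra k C]
    (f : A →ₐ[k] C) : IsRingEpi f.toRingHom ↔ IsAlgEpi f := by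
  constructor
  · intro h T _ _ g₁ g₂ hg
    have : g₁.toRingHom = g₂.toRingHom := by
      apply h
      ext x
      exact congrArg (fun (φ : A →ₐ[k] T) => φ x) hg
    exact AlgHom.ext fun x => congrArg (fun (φ : C →+* T) => φ x) this
  · intro h T _ g₁ g₂ hg
    -- pass to the subring generated by both images, which is a `k`-algebra
    set S : Subring T := Subring.closure (Set.range g₁ ∪ Set.range g₂) with hS
    have hkeq : ∀ c : k, g₁ (algebraMap k C c) = g₂ (algebraMap k C c) := by
      intro c
      have h1 : algebraMap k C c = f (algebraMap k A c) := (f.commutes c).symm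
      rw [h1]
      exact congrArg (fun (φ : A →+* T) => φ (algebraMap k A c)) hg
    have hcentral : ∀ (c : k) (x : T), x ∈ S → g₁ (algebraMap k C c) * x = x * g₁ (algebraMap k C c) := by
      intro c x hx
      have hle : S ≤ Subring.centralizer {g₁ (algebraMap k C c)} := by
        rw [hS]
        apply Subring.closure_le.2
        rintro y (⟨z, rfl⟩ | ⟨z, rfl⟩)
        · rw [SetLike.mem_coe, Subring.mem_centralizer_iff]
          rintro w rfl
          rw [← map_mul, ← map_mul, Algebra.commutes]
        · rw [SetLike.mem_coe, Subring.mem_centralizer_iff]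
          rintro w rfl
          rw [hkeq, ← map_mul, ← map_mul, Algebra.commutes]
      exact Subring.mem_centralizer_iff.mp (hle hx) _ rfl
    have hmem₁ : ∀ x : C, g₁ x ∈ S :=
      fun x => Subring.subset_closure (Or.inl ⟨x, rfl⟩)
    have hmem₂ : ∀ x : C, g₂ x ∈ S :=
      fun x => Subring.subset_closure (Or.inr ⟨x, rfl⟩)
    -- algebra structure on S
    let i : k →+* S := {
      toFun := fun c => ⟨g₁ (algebraMap k C c), hmem₁ _⟩
      map_one' := by ext; simp
      map_mul' := fun a b => by ext; simp
      map_zero' := by ext; simp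
      map_add' := fun a b => by ext; simp }
    letI : Algebra k S := i.toAlgebra' (fun c x => by
      ext
      exact hcentral c x.1 x.2)
    have halg : algebraMap k S = i := rfl
    let gh₁ : C →ₐ[k] S := {
      toFun := fun x => ⟨g₁ x, hmem₁ x⟩
      map_one' := by ext; simp
      map_mul' := fun a b => by ext; simp
      map_zero' := by ext; simp
      map_add' := fun a b => by ext; simp
      commutes' := fun c => by rw [halg]; rfl }
    let gh₂ : C →ₐ[k] S := {
      toFun := fun x => ⟨g₂ x, hmem₂ x⟩
      map_one' := by ext; simp
      map_mul' := fun a b => by ext; simp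
      map_zero' := by ext; simp
      map_add' := fun a b => by ext; simp
      commutes' := fun c => by rw [halg]; ext; exact (hkeq c).symm }
    have key : gh₁ = gh₂ := by
      apply h S
      ext x
      exact congrArg (fun (φ : A →+* T) => φ x) hg
    ext x
    have := congrArg (fun (φ : C →ₐ[k] S) => (φ x).1) key
    exact this

/-- **Proposition `PMatrixReductionEpimorphism`, (i) ⇔ (iii).** Let `√ⁿ(−)` be
the matrix reduction functor, left adjoint to `Mₙ(−)` on `k`-algebras. For a `k`-algebra
homomorphism `f : A → Mₙ(B)`, `f` is a ring epimorphism iff the induced map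
`√ⁿf : √ⁿA → √ⁿ(Mₙ(B))` is a ring epimorphism. Here `√ⁿA` and `√ⁿ(Mₙ(B))` are given by their
universal properties, and `√ⁿf` is the unique map `F` with `Mₙ(F) ∘ μ_A = μ_{Mₙ(B)} ∘ f`. -/
theorem stmt16 {k A B RA RM : Type u} [Field k]
    [Ring A] [Algebra k A] [Ring B] [Algebra k B]
    [Ring RA] [Algebra k RA] [Ring RM] [Algebra k RM] {n : ℕ}
    (μA : A →ₐ[k] Matrix (Fin n) (Fin n) RA) (hA : IsMatrixReduction n μA)
    (μM : Matrix (Fin n) (Fin n) B →ₐ[k] Matrix (Fin n) (Fin n) RM)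
    (hM : IsMatrixReduction n μM)
    (f : A →ₐ[k] Matrix (Fin n) (Fin n) B)
    (F : RA →ₐ[k] RM) (hF : (AlgHom.mapMatrix F).comp μA = μM.comp f) :
    IsRingEpi f.toRingHom ↔ IsRingEpi F.toRingHom := by
  rw [ringEpi_iff_algEpi, ringEpi_iff_algEpi]
  constructor
  · -- f epi ⇒ F epi
    intro hf T _ _ h₁ h₂ hcomp
    have e1 : ((AlgHom.mapMatrix h₁).comp μM).comp f = ((AlgHom.mapMatrix h₂).comp μM).comp f := by
      rw [AlgHom.comp_assoc, ← hF, AlgHom.comp_assoc, ← hF,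
        ← AlgHom.comp_assoc, ← AlgHom.comp_assoc, AlgHom.mapMatrix_comp, AlgHom.mapMatrix_comp,
        hcomp]
    have e2 : (AlgHom.mapMatrix h₁).comp μM = (AlgHom.mapMatrix h₂).comp μM :=
      hf _ _ _ e1
    obtain ⟨g', -, huniq⟩ := hM T ((AlgHom.mapMatrix h₁).comp μM)
    rw [huniq h₁ rfl, huniq h₂ e2.symm]
  · -- F epi ⇒ f epi
    intro hFe T _ _ g₁ g₂ hcomp
    rcases Nat.eq_zero_or_pos n with hn | hn
    · -- n = 0 : Mₙ(B) is trivial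
      subst hn
      haveI : Subsingleton (Matrix (Fin 0) (Fin 0) B) :=
        ⟨fun x y => by ext i; exact absurd i.2 (Nat.not_lt_zero _)⟩
      ext x
      rw [Subsingleton.elim x 1, map_one, map_one]
    · -- n > 0
      let ι := scalarAH k T n
      obtain ⟨g₁', hg₁', hu₁⟩ := hM T (ι.comp g₁)
      obtain ⟨g₂', hg₂', hu₂⟩ := hM T (ι.comp g₂)
      have ekey : ∀ (g' : RM →ₐ[k] T) (g : Matrix (Fin n) (Fin n) B →ₐ[k] T),
          (AlgHom.mapMatrix g').comp μM = ι.comp g →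
          (AlgHom.mapMatrix (g'.comp F)).comp μA = (ι.comp g).comp f := by
        intro g' g hg
        rw [← AlgHom.mapMatrix_comp, AlgHom.comp_assoc, hF, ← AlgHom.comp_assoc, hg]
      obtain ⟨G, -, hGuniq⟩ := hA T ((ι.comp g₁).comp f)
      have hG1 : g₁'.comp F = G := hGuniq _ (ekey g₁' g₁ hg₁')
      have hG2 : g₂'.comp F = G := by
        apply hGuniq
        rw [ekey g₂' g₂ hg₂', AlgHom.comp_assoc, AlgHom.comp_assoc, hcomp]
      have : g₁' = g₂' := hFe T g₁' g₂' (hG1.trans hG2.symm)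
      have hι : ι.comp g₁ = ι.comp g₂ := by
        rw [← hg₁', ← hg₂', this]
      ext x
      exact scalarAH_inj k T hn (by simpa using AlgHom.congr_fun hι x)
end

section
/- Let k be a field, Q a finite quiver with vertices 1,…,n, α ∈ ℕ^{Q₀} a dimension vector, and q_{Q,α}: kQ → M_α(k⟨X_{Q,α}⟩) the canonical map sending the idempotent e_m to the block-diagonal idempotent with identity block at position m and each arrow e to the block matrix with the generic matrix X^{(e)} = (x^{(e)}_{ij}) in the (t(e), s(e)) block and zeros elsewhere. Suppose f: kQ → R' is a k-algebra homomorphism and S is a right R'-module with e_i(kQ) ⊗_{kQ} R' ≅ S^{α_i} for all i. Then R' ≅ M_{Σα_i}(End_{R'}(S)), and f, viewed as a map into this matrix algebra, factors uniquely as f = M(f') ∘ q_{Q,α} for a k-algebra homomorphism f': k⟨X_{Q,α}⟩ → End_{R'}(S). -/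
universe u v

open MulOpposite

section Aux

variable {k : Type u} [Field k] {R' : Type u} [Ring R'] [Algebra k R']
variable {S : Type u} [AddCommGroup S] [Module R'ᵐᵒᵖ S]
variable [Module k S] [SMulCommClass R'ᵐᵒᵖ k S] [IsScalarTower k R'ᵐᵒᵖ S]
variable {I : Type v} [Fintype I] [DecidableEq I]

set_option linter.unusedSectionVars false

/-- Entry of the matrix associated to `x : R'` under a decomposition `Ψ`. -/
noncomputable def entryMap (Ψ : R' ≃ₗ[R'ᵐᵒᵖ] (I → S)) (x : R') (i j : I) :
    Module.End R'ᵐᵒᵖ S where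
  toFun s := Ψ (x * Ψ.symm (Pi.single j s)) i
  map_add' s u := by
    show Ψ (x * Ψ.symm (Pi.single j (s + u))) i
        = Ψ (x * Ψ.symm (Pi.single j s)) i + Ψ (x * Ψ.symm (Pi.single j u)) i
    rw [Pi.single_add, map_add, mul_add, map_add, Pi.add_apply]
  map_smul' a s := by
    show Ψ (x * Ψ.symm (Pi.single j (a • s))) i = a • Ψ (x * Ψ.symm (Pi.single j s)) i
    rw [Pi.single_smul, map_smul, smul_eq_mul_unop, ← mul_assoc,
      ← smul_eq_mul_unop, map_smul, Pi.smul_apply]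

@[simp] lemma entryMap_apply (Ψ : R' ≃ₗ[R'ᵐᵒᵖ] (I → S)) (x : R') (i j : I) (s : S) :
    entryMap Ψ x i j s = Ψ (x * Ψ.symm (Pi.single j s)) i := rfl

lemma psi_smul_k (Ψ : R' ≃ₗ[R'ᵐᵒᵖ] (I → S)) (c : k) (y : R') :
    Ψ (c • y) = c • Ψ y := by
  have h1 : c • y = op (algebraMap k R' c) • y := by
    rw [smul_eq_mul_unop, unop_op, ← Algebra.commutes, Algebra.smul_def]
  rw [h1, map_smul]
  funext i
  rw [Pi.smul_apply, Pi.smul_apply]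
  have h2 : op (algebraMap k R' c) = algebraMap k R'ᵐᵒᵖ c := rfl
  rw [h2, algebraMap_smul]

/-- The algebra isomorphism `R' ≃ₐ[k] Matrix I I (End S)` induced by a module
decomposition `Ψ : R' ≃ₗ (I → S)`. -/
noncomputable def matPhi (Ψ : R' ≃ₗ[R'ᵐᵒᵖ] (I → S)) :
    R' ≃ₐ[k] Matrix I I (Module.End R'ᵐᵒᵖ S) where
  toFun x := Matrix.of fun i j => entryMap Ψ x i j
  invFun A := Ψ.symm (fun i => ∑ j, A i j (Ψ 1 j))
  left_inv x := by
    have h0 : (fun i => ∑ j, entryMap Ψ x i j (Ψ 1 j))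
        = Ψ (∑ j, x * Ψ.symm (Pi.single j (Ψ 1 j))) := by
      funext i
      rw [map_sum]
      simp [entryMap_apply, Finset.sum_apply]
    simp only [Matrix.of_apply, h0]
    rw [← Finset.mul_sum, ← map_sum, Finset.univ_sum_single, Ψ.symm_apply_apply,
      Ψ.symm_apply_apply, mul_one]
  right_inv A := by
    ext i j s
    simp only [Matrix.of_apply, entryMap_apply]
    set r := Ψ.symm (Pi.single j s) with hr
    have h1 : Ψ.symm (fun i => ∑ l, A i l (Ψ 1 l)) * r
        = op r • Ψ.symm (fun i => ∑ l, A i l (Ψ 1 l)) := by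
      rw [smul_eq_mul_unop, unop_op]
    rw [h1, map_smul, Ψ.apply_symm_apply]
    have h2 : ∀ l, op r • (A i l (Ψ 1 l)) = A i l (Ψ r l) := by
      intro l
      rw [← map_smul]
      congr 1
      rw [← Pi.smul_apply, ← map_smul, smul_eq_mul_unop, unop_op, one_mul]
    rw [Pi.smul_apply, Finset.smul_sum]
    calc ∑ l, op r • (A i l (Ψ 1 l))
        = ∑ l, A i l ((Pi.single j s : I → S) l) := by
          refine Finset.sum_congr rfl fun l _ => ?_
          rw [h2 l, hr, Ψ.apply_symm_apply]
      _ = A i j s := by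
          rw [Finset.sum_eq_single j]
          · simp
          · intro b _ hb; rw [Pi.single_eq_of_ne hb, map_zero]
          · intro h; exact absurd (Finset.mem_univ j) h
  map_mul' x y := by
    ext i j s
    simp only [Matrix.of_apply, entryMap_apply, Matrix.mul_apply,
      LinearMap.coe_sum, Finset.sum_apply, Module.End.mul_apply]
    have key : ∀ z : I → S, ∑ l, Ψ.symm (Pi.single l (z l)) = Ψ.symm z := by
      intro z; rw [← map_sum, Finset.univ_sum_single]
    calc Ψ (x * y * Ψ.symm (Pi.single j s)) i
        = Ψ (∑ l, x * Ψ.symm (Pi.single l (Ψ (y * Ψ.symm (Pi.single j s)) l))) i := by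
          rw [← Finset.mul_sum, key, Ψ.symm_apply_apply, mul_assoc]
      _ = ∑ l, Ψ (x * Ψ.symm (Pi.single l (Ψ (y * Ψ.symm (Pi.single j s)) l))) i := by
          rw [map_sum]; simp [Finset.sum_apply]
  map_add' x y := by
    ext i j s
    simp [entryMap_apply, add_mul, Matrix.add_apply]
  commutes' c := by
    ext i j s
    have h1 : algebraMap k R' c * Ψ.symm (Pi.single j s) = c • Ψ.symm (Pi.single j s) := by
      rw [Algebra.smul_def]
    simp only [Matrix.of_apply, entryMap_apply, h1, psi_smul_k, Ψ.apply_symm_apply]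
    rw [Matrix.algebraMap_eq_diagonal]
    by_cases h : i = j
    · subst h
      simp [Pi.smul_apply, Module.algebraMap_end_apply]
    · rw [Matrix.diagonal_apply_ne _ h, Pi.smul_apply, Pi.single_eq_of_ne h, smul_zero]
      rfl

@[simp] lemma matPhi_apply (Ψ : R' ≃ₗ[R'ᵐᵒᵖ] (I → S)) (x : R') (i j : I) (s : S) :
    (matPhi (k := k) Ψ x) i j s = Ψ (x * Ψ.symm (Pi.single j s)) i := rfl

end Aux

section Aux1

variable {R' : Type u} [Ring R']
variable {S : Type u} [AddCommGroup S] [Module R'ᵐᵒᵖ S]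
variable {n : ℕ} {α : Fin n → ℕ}

set_option linter.unusedSectionVars false

lemma eps_mul_mem (ε : Fin n → R') (v : Fin n) (x : R') :
    ε v * x ∈ Submodule.span R'ᵐᵒᵖ {ε v} :=
  Submodule.mem_span_singleton.2 ⟨op x, by rw [smul_eq_mul_unop, unop_op]⟩

/-- The decomposition `R' ≃ Π S` coming from orthogonal idempotents. -/
noncomputable def psiEquiv (ε : Fin n → R')
    (hidem : ∀ v, ε v * ε v = ε v) (horth : ∀ v w, v ≠ w → ε v * ε w = 0)
    (hsum : ∑ v, ε v = 1)
    (g : ∀ v, (Submodule.span R'ᵐᵒᵖ {ε v} : Submodule R'ᵐᵒᵖ R') ≃ₗ[R'ᵐᵒᵖ]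
      (Fin (α v) → S)) :
    R' ≃ₗ[R'ᵐᵒᵖ] ((Σ v : Fin n, Fin (α v)) → S) where
  toFun x := fun r => g r.1 ⟨ε r.1 * x, eps_mul_mem ε r.1 x⟩ r.2
  invFun y := ∑ v, ((g v).symm (fun i => y ⟨v, i⟩) : R')
  map_add' x y := by
    funext r
    have h : (⟨ε r.1 * (x + y), eps_mul_mem ε r.1 _⟩ :
        Submodule.span R'ᵐᵒᵖ {ε r.1}) = ⟨ε r.1 * x, eps_mul_mem ε r.1 x⟩
        + ⟨ε r.1 * y, eps_mul_mem ε r.1 y⟩ := by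
      apply Subtype.ext; simp [mul_add]
    show g r.1 ⟨ε r.1 * (x + y), eps_mul_mem ε r.1 _⟩ r.2
        = g r.1 ⟨ε r.1 * x, eps_mul_mem ε r.1 x⟩ r.2
        + g r.1 ⟨ε r.1 * y, eps_mul_mem ε r.1 y⟩ r.2
    rw [h, map_add, Pi.add_apply]
  map_smul' a x := by
    funext r
    have h : (⟨ε r.1 * (a • x), eps_mul_mem ε r.1 _⟩ :
        Submodule.span R'ᵐᵒᵖ {ε r.1}) = a • ⟨ε r.1 * x, eps_mul_mem ε r.1 x⟩ := by
      apply Subtype.ext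
      simp [smul_eq_mul_unop, mul_assoc]
    show g r.1 ⟨ε r.1 * (a • x), eps_mul_mem ε r.1 _⟩ r.2
        = (a • (fun r : (Σ v : Fin n, Fin (α v)) =>
            g r.1 ⟨ε r.1 * x, eps_mul_mem ε r.1 x⟩ r.2)) r
    rw [h, map_smul, Pi.smul_apply, Pi.smul_apply]
  left_inv x := by
    have h : ∀ v : Fin n, ((g v).symm (fun i =>
        g v ⟨ε v * x, eps_mul_mem ε v x⟩ i) : R') = ε v * x := by
      intro v
      have : (fun i => g v ⟨ε v * x, eps_mul_mem ε v x⟩ i)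
          = g v ⟨ε v * x, eps_mul_mem ε v x⟩ := rfl
      rw [this, (g v).symm_apply_apply]
    simp only [h]
    rw [← Finset.sum_mul, hsum, one_mul]
  right_inv y := by
    funext r
    obtain ⟨v, i⟩ := r
    have hval : ∀ w : Fin n, ∃ rw : R',
        ((g w).symm (fun i => y ⟨w, i⟩) : R') = ε w * rw := by
      intro w
      obtain ⟨a, ha⟩ := Submodule.mem_span_singleton.1
        ((g w).symm (fun i => y ⟨w, i⟩)).2
      exact ⟨a.unop, by rw [← ha, smul_eq_mul_unop]⟩
    have key : ε v * ∑ w, ((g w).symm (fun i => y ⟨w, i⟩) : R')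
        = ((g v).symm (fun i => y ⟨v, i⟩) : R') := by
      rw [Finset.mul_sum, Finset.sum_eq_single v]
      · obtain ⟨rv, hrv⟩ := hval v
        rw [hrv, ← mul_assoc, hidem v]
      · intro w _ hw
        obtain ⟨rw', hrw⟩ := hval w
        rw [hrw, ← mul_assoc, horth v w (Ne.symm hw), zero_mul]
      · intro h; exact absurd (Finset.mem_univ v) h
    have h2 : (⟨ε v * ∑ w, ((g w).symm (fun i => y ⟨w, i⟩) : R'),
        eps_mul_mem ε v _⟩ : Submodule.span R'ᵐᵒᵖ {ε v})
        = (g v).symm (fun i => y ⟨v, i⟩) := by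
      apply Subtype.ext; simpa using key
    show g v ⟨ε v * ∑ w, ((g w).symm (fun i => y ⟨w, i⟩) : R'), _⟩ i = y ⟨v, i⟩
    rw [h2, (g v).apply_symm_apply]

lemma psiEquiv_eps_mul (ε : Fin n → R')
    (hidem : ∀ v, ε v * ε v = ε v) (horth : ∀ v w, v ≠ w → ε v * ε w = 0)
    (hsum : ∑ v, ε v = 1)
    (g : ∀ v, (Submodule.span R'ᵐᵒᵖ {ε v} : Submodule R'ᵐᵒᵖ R') ≃ₗ[R'ᵐᵒᵖ]
      (Fin (α v) → S))
    (v : Fin n) (x : R') (r : Σ v : Fin n, Fin (α v)) :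
    psiEquiv ε hidem horth hsum g (ε v * x) r
      = if r.1 = v then psiEquiv ε hidem horth hsum g x r else 0 := by
  obtain ⟨w, i⟩ := r
  show g w ⟨ε w * (ε v * x), _⟩ i = _
  by_cases h : w = v
  · subst h
    rw [if_pos rfl]
    have : (⟨ε w * (ε w * x), eps_mul_mem ε w _⟩ :
        Submodule.span R'ᵐᵒᵖ {ε w}) = ⟨ε w * x, eps_mul_mem ε w x⟩ := by
      apply Subtype.ext; show ε w * (ε w * x) = ε w * x
      rw [← mul_assoc, hidem]
    rw [this]; rfl
  · rw [if_neg h]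
    have : (⟨ε w * (ε v * x), eps_mul_mem ε w _⟩ :
        Submodule.span R'ᵐᵒᵖ {ε w}) = 0 := by
      apply Subtype.ext; show ε w * (ε v * x) = 0
      rw [← mul_assoc, horth w v h, zero_mul]
    rw [this, map_zero, Pi.zero_apply]

end Aux1

set_option maxHeartbeats 1000000 in
/-- **Proposition `PCanonicalForm`.** Let `Q` be a finite quiver with vertex set
`Fin n` (arrows `E` with source `s` and target `t`), `kQ` its path algebra — here presented as a
`k`-algebra `P` with a complete family of orthogonal idempotents `ev` and arrow elements `ar`
satisfying the universal property of the path algebra — and `α : Fin n → ℕ` a dimension vector.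
Let `q : kQ → M_α(k⟨X_{Q,α}⟩)` be the canonical map (matrices indexed by `Σ v, Fin (α v)`,
sending `ev m` to the `m`-th block-diagonal idempotent and each arrow `e` to the generic matrix
`X^{(e)}` placed in the `(t e, s e)` block). If `f : kQ → R'` is a `k`-algebra homomorphism and
`S` is a right `R'`-module with `e_i(kQ) ⊗_{kQ} R' ≅ f(ev i)·R' ≅ S^{α i}` for all `i`, then
`R' ≅ M_α(End_{R'}(S))` and, under this isomorphism, `f` factors uniquely as `M(f') ∘ q` for a
`k`-algebra homomorphism `f' : k⟨X_{Q,α}⟩ → End_{R'}(S)`. -/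
theorem stmt18 {k : Type u} [Field k] {n : ℕ} {E : Type u} [Fintype E]
    (s t : E → Fin n) (α : Fin n → ℕ)
    {P : Type u} [Ring P] [Algebra k P]
    (ev : Fin n → P) (ar : E → P)
    (hidem : ∀ v, ev v * ev v = ev v)
    (horth : ∀ v w, v ≠ w → ev v * ev w = 0)
    (hsum : ∑ v, ev v = 1)
    (harr : ∀ e, ev (t e) * ar e * ev (s e) = ar e)
    (hUP : ∀ (D : Type u) [Ring D] [Algebra k D] (Ev : Fin n → D) (Ar : E → D),
      (∀ v, Ev v * Ev v = Ev v) → (∀ v w, v ≠ w → Ev v * Ev w = 0) → (∑ v, Ev v = 1) →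
      (∀ e, Ev (t e) * Ar e * Ev (s e) = Ar e) →
      ∃! h : P →ₐ[k] D, (∀ v, h (ev v) = Ev v) ∧ ∀ e, h (ar e) = Ar e)
    {R' : Type u} [Ring R'] [Algebra k R'] (f : P →ₐ[k] R')
    (S : Type u) [AddCommGroup S] [Module R'ᵐᵒᵖ S]
    [Module k S] [SMulCommClass R'ᵐᵒᵖ k S] [IsScalarTower k R'ᵐᵒᵖ S]
    (hiso : ∀ i : Fin n,
      Nonempty ((Submodule.span R'ᵐᵒᵖ {f (ev i)} : Submodule R'ᵐᵒᵖ R') ≃ₗ[R'ᵐᵒᵖ]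
        (Fin (α i) → S)))
    (q : P →ₐ[k] Matrix (Σ v : Fin n, Fin (α v)) (Σ v : Fin n, Fin (α v))
      (FreeAlgebra k (Σ e : E, Fin (α (t e)) × Fin (α (s e)))))
    (hqv : ∀ v : Fin n, q (ev v) =
      Matrix.of fun r c : (Σ v : Fin n, Fin (α v)) => if r.1 = v ∧ r = c then 1 else 0)
    (hqe : ∀ e : E, q (ar e) =
      Matrix.of fun r c : (Σ v : Fin n, Fin (α v)) =>
        if h : r.1 = t e ∧ c.1 = s e then
          FreeAlgebra.ι k ⟨e, (Fin.cast (congrArg α h.1) r.2, Fin.cast (congrArg α h.2) c.2)⟩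
        else 0) :
    ∃ Φ : R' ≃ₐ[k] Matrix (Σ v : Fin n, Fin (α v)) (Σ v : Fin n, Fin (α v))
        (Module.End R'ᵐᵒᵖ S),
      ∃! f' : FreeAlgebra k (Σ e : E, Fin (α (t e)) × Fin (α (s e))) →ₐ[k]
          Module.End R'ᵐᵒᵖ S,
        (AlgHom.mapMatrix f').comp q = Φ.toAlgHom.comp f := by
  classical
  have hidem' : ∀ v, f (ev v) * f (ev v) = f (ev v) := fun v => by
    rw [← map_mul, hidem]
  have horth' : ∀ v w, v ≠ w → f (ev v) * f (ev w) = 0 := fun v w h => by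
    rw [← map_mul, horth v w h, map_zero]
  have hsum' : ∑ v, f (ev v) = 1 := by rw [← map_sum, hsum, map_one]
  let g : ∀ v, (Submodule.span R'ᵐᵒᵖ {f (ev v)} : Submodule R'ᵐᵒᵖ R') ≃ₗ[R'ᵐᵒᵖ]
      (Fin (α v) → S) := fun v => (hiso v).some
  let Ψ : R' ≃ₗ[R'ᵐᵒᵖ] ((Σ v : Fin n, Fin (α v)) → S) :=
    psiEquiv (fun v => f (ev v)) hidem' horth' hsum' g
  let Φ : R' ≃ₐ[k] Matrix (Σ v : Fin n, Fin (α v)) (Σ v : Fin n, Fin (α v))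
      (Module.End R'ᵐᵒᵖ S) := matPhi (k := k) (R' := R') (S := S) (I := (Σ v : Fin n, Fin (α v))) Ψ
  -- the idempotents go to the block-diagonal idempotents
  have hkey : ∀ v, Φ (f (ev v)) = Matrix.of fun r c : (Σ v : Fin n, Fin (α v)) =>
      if r.1 = v ∧ r = c then (1 : Module.End R'ᵐᵒᵖ S) else 0 := by
    intro v
    ext r c u
    show Ψ (f (ev v) * Ψ.symm (Pi.single c u)) r = _
    rw [psiEquiv_eps_mul (fun v => f (ev v)) hidem' horth' hsum' g v _ r]
    show (if r.1 = v then Ψ (Ψ.symm (Pi.single c u)) r else 0) = _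
    rw [Ψ.apply_symm_apply]
    by_cases h1 : r.1 = v
    · by_cases h2 : r = c
      · subst h2
        simp [h1, Matrix.of_apply]
      · rw [if_pos h1, Matrix.of_apply, if_neg (by tauto), Pi.single_eq_of_ne h2]
        rfl
    · rw [if_neg h1, Matrix.of_apply, if_neg (by tauto)]
      rfl
  have hdiag : ∀ v, Φ (f (ev v)) = Matrix.diagonal
      (fun r : (Σ v : Fin n, Fin (α v)) => if r.1 = v then (1 : Module.End R'ᵐᵒᵖ S) else 0) := by
    intro v
    rw [hkey v]
    ext r c
    rw [Matrix.of_apply, Matrix.diagonal_apply]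
    by_cases h2 : r = c
    · subst h2; by_cases h1 : r.1 = v <;> simp [h1]
    · simp [h2, fun h => h2 h]
  -- the arrows are supported in one block
  have hsupp : ∀ e (r c : Σ v : Fin n, Fin (α v)), ¬(r.1 = t e ∧ c.1 = s e) →
      Φ (f (ar e)) r c = 0 := by
    intro e r c h
    have h0 : Φ (f (ar e)) = Φ (f (ev (t e))) * Φ (f (ar e)) * Φ (f (ev (s e))) := by
      rw [← map_mul, ← map_mul, ← map_mul, ← map_mul, harr]
    rw [h0, hdiag (t e), hdiag (s e), Matrix.mul_diagonal, Matrix.diagonal_mul]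
    rcases not_and_or.1 h with h' | h'
    · rw [if_neg h', zero_mul, zero_mul]
    · rw [if_neg h', mul_zero]
  -- the candidate factorization
  let f' : FreeAlgebra k (Σ e : E, Fin (α (t e)) × Fin (α (s e))) →ₐ[k]
      Module.End R'ᵐᵒᵖ S :=
    FreeAlgebra.lift k fun x => Φ (f (ar x.1)) ⟨t x.1, x.2.1⟩ ⟨s x.1, x.2.2⟩
  have hf'ι : ∀ (e : E) (i : Fin (α (t e))) (j : Fin (α (s e))),
      f' (FreeAlgebra.ι k ⟨e, (i, j)⟩) = Φ (f (ar e)) ⟨t e, i⟩ ⟨s e, j⟩ := by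
    intro e i j
    exact FreeAlgebra.lift_ι_apply _ _
  -- f' matches on the generators of the image of q
  have spec2 : ∀ e, (AlgHom.mapMatrix f') (q (ar e)) = Φ (f (ar e)) := by
    intro e
    rw [hqe e]
    ext r c
    rw [AlgHom.mapMatrix_apply, Matrix.map_apply, Matrix.of_apply]
    obtain ⟨rv, ri⟩ := r
    obtain ⟨cv, ci⟩ := c
    by_cases h : rv = t e ∧ cv = s e
    · obtain ⟨h1, h2⟩ := h
      subst h1; subst h2
      rw [dif_pos ⟨rfl, rfl⟩]
      have hc1 : ∀ (p : α (t e) = α (t e)) (i : Fin (α (t e))), Fin.cast p i = i := by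
        intro p i; apply Fin.ext; simp
      have hc2 : ∀ (p : α (s e) = α (s e)) (j : Fin (α (s e))), Fin.cast p j = j := by
        intro p j; apply Fin.ext; simp
      rw [hc1, hc2, hf'ι]
    · rw [dif_neg h, map_zero, hsupp e _ _ h]
  have spec1 : ∀ v, (AlgHom.mapMatrix f') (q (ev v)) = Φ (f (ev v)) := by
    intro v
    rw [hqv v, hkey v]
    ext r c
    rw [AlgHom.mapMatrix_apply, Matrix.map_apply, Matrix.of_apply, Matrix.of_apply,
      apply_ite f', map_one, map_zero]
  -- use the universal property to show the two maps agree
  refine ⟨Φ, f', ?_, ?_⟩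
  · obtain ⟨h, -, huniq⟩ := hUP
      (Matrix (Σ v : Fin n, Fin (α v)) (Σ v : Fin n, Fin (α v)) (Module.End R'ᵐᵒᵖ S))
      (fun v => Φ (f (ev v))) (fun e => Φ (f (ar e)))
      (fun v => by rw [← map_mul, ← map_mul, hidem])
      (fun v w hvw => by rw [← map_mul, ← map_mul, horth v w hvw, map_zero, map_zero])
      (by rw [← map_sum, ← map_sum, hsum, map_one, map_one])
      (fun e => by rw [← map_mul, ← map_mul, ← map_mul, ← map_mul, harr])
    have hA := huniq ((AlgHom.mapMatrix f').comp q)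
      ⟨fun v => by rw [AlgHom.comp_apply]; exact spec1 v,
       fun e => by rw [AlgHom.comp_apply]; exact spec2 e⟩
    have hB := huniq (Φ.toAlgHom.comp f) ⟨fun v => rfl, fun e => rfl⟩
    rw [hA, hB]
  · intro f'' hf''
    apply FreeAlgebra.hom_ext
    funext x
    obtain ⟨e, i, j⟩ := x
    have hq : (AlgHom.mapMatrix f'') (q (ar e)) = Φ (f (ar e)) := by
      rw [← AlgHom.comp_apply, hf'']; rfl
    have hc1 : ∀ (p : α (t e) = α (t e)) (i : Fin (α (t e))), Fin.cast p i = i := by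
      intro p i; apply Fin.ext; simp
    have hc2 : ∀ (p : α (s e) = α (s e)) (j : Fin (α (s e))), Fin.cast p j = j := by
      intro p j; apply Fin.ext; simp
    have hq' : (q (ar e)) ⟨t e, i⟩ ⟨s e, j⟩ = FreeAlgebra.ι k ⟨e, (i, j)⟩ := by
      rw [hqe e, Matrix.of_apply, dif_pos ⟨rfl, rfl⟩, hc1, hc2]
    have hentry : f'' ((q (ar e)) ⟨t e, i⟩ ⟨s e, j⟩)
        = Φ (f (ar e)) ⟨t e, i⟩ ⟨s e, j⟩ := congrFun (congrFun hq ⟨t e, i⟩) ⟨s e, j⟩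
    rw [hq'] at hentry
    show f'' (FreeAlgebra.ι k ⟨e, (i, j)⟩) = f' (FreeAlgebra.ι k ⟨e, (i, j)⟩)
    rw [hentry, hf'ι]
end
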